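/- arXiv:1506.06866 — 4 statements merged into one kernel-verified Lean document; each statement's English description precedes it below -/
import Mathlib

section
/- Let K be a simplicial complex and I a vertex of K whose link Lk(I) in K is contractible. Then the geometric realization of K is homotopy equivalent to the geometric realization of the subcomplex K \ St(I) obtained by removing the open star of I. -/
attribute [local instance] Classical.propDecidable

/-- An abstract simplicial complex on a vertex type `α` (faces are downward closed). -/
structure ASC (α : Type) where
  faces : Set (Finset α)
  down_closed : ∀ {s t : Finset α}, s ∈ faces → t ⊆ s → t ∈ faces

namespace ASC

variable {α β : Type}

/-- The geometric realization of an abstract simplicial complex, as the space of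
convex-combination weight functions supported on a face. -/
def realization [Fintype α] (K : ASC α) : Type :=
  {f : α → ℝ // (∀ a, 0 ≤ f a) ∧ (∑ a, f a) = 1 ∧
    (Finset.univ.filter fun a => f a ≠ 0) ∈ K.faces}

instance [Fintype α] (K : ASC α) : TopologicalSpace K.realization :=
  inferInstanceAs (TopologicalSpace {f : α → ℝ // _})

/-- `a` is a vertex of `K`. -/
def IsVertex (K : ASC α) (a : α) : Prop := {a} ∈ K.faces

/-- The complex `K \ St a`: all faces of `K` not containing `a`. -/
def delStar (K : ASC α) (a : α) : ASC α where
  faces := {s | s ∈ K.faces ∧ a ∉ s}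
  down_closed := fun hs hts => ⟨K.down_closed hs.1 hts, fun hat => hs.2 (hts hat)⟩

/-- The link of a vertex `a` in `K`. -/
def link (K : ASC α) (a : α) : ASC α where
  faces := {s | s ∈ K.faces ∧ a ∉ s ∧ insert a s ∈ K.faces}
  down_closed := fun hs hts =>
    ⟨K.down_closed hs.1 hts, fun hat => hs.2.1 (hts hat),
      K.down_closed hs.2.2 (Finset.insert_subset_insert _ hts)⟩

/-- The join of two abstract simplicial complexes. -/
def join (K : ASC α) (L : ASC β) : ASC (α ⊕ β) where
  faces := {s | ∃ u ∈ K.faces, ∃ v ∈ L.faces, s = u.image Sum.inl ∪ v.image Sum.inr}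
  down_closed := by
    rintro s t ⟨u, hu, v, hv, rfl⟩ hts
    refine ⟨u.filter (fun x => Sum.inl x ∈ t), K.down_closed hu (Finset.filter_subset _ _),
      v.filter (fun y => Sum.inr y ∈ t), L.down_closed hv (Finset.filter_subset _ _), ?_⟩
    ext x
    constructor
    · intro hx
      have hx' := hts hx
      simp only [Finset.mem_union, Finset.mem_image, Finset.mem_filter] at hx' ⊢
      rcases hx' with ⟨y, hy, rfl⟩ | ⟨y, hy, rfl⟩
      · exact Or.inl ⟨y, ⟨hy, hx⟩, rfl⟩
      · exact Or.inr ⟨y, ⟨hy, hx⟩, rfl⟩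
    · intro hx
      simp only [Finset.mem_union, Finset.mem_image, Finset.mem_filter] at hx
      rcases hx with ⟨y, ⟨hy, hyt⟩, rfl⟩ | ⟨y, ⟨hy, hyt⟩, rfl⟩ <;> exact hyt

/-- The join of a finite family of simplicial complexes on a common vertex type
(with pairwise disjoint vertex sets in applications). -/
def famJoin {ι : Type} [Fintype ι] (K : ι → ASC α) : ASC α where
  faces := {s | ∃ f : ι → Finset α, (∀ i, f i ∈ (K i).faces) ∧ s = Finset.univ.biUnion f}
  down_closed := by
    intro s t hs hts
    obtain ⟨f, hf, rfl⟩ := hs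
    refine ⟨fun i => f i ∩ t, fun i => (K i).down_closed (hf i) Finset.inter_subset_left, ?_⟩
    ext a
    simp only [Finset.mem_biUnion, Finset.mem_inter, Finset.mem_univ, true_and]
    constructor
    · intro ha
      obtain ⟨i, hi⟩ := Finset.mem_biUnion.1 (hts ha)
      exact ⟨i, hi.2, ha⟩
    · rintro ⟨i, hi, ha⟩
      exact ha

end ASC

namespace StarAux

open ContinuousMap Set unitInterval

variable {α : Type} [Fintype α]

lemma supp_mem {f : α → ℝ} {b : α} :
    b ∈ (Finset.univ.filter fun c => f c ≠ 0) ↔ f b ≠ 0 := by simp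

section

variable (K : ASC α) (a : α)

lemma realization_le_one (x : K.realization) (b : α) : x.1 b ≤ 1 := by
  have h := Finset.single_le_sum (f := x.1) (fun i _ => x.2.1 i) (Finset.mem_univ b)
  rw [x.2.2.1] at h; exact h

lemma link_coord_zero (q : (K.link a).realization) : q.1 a = 0 := by
  by_contra h
  exact q.2.2.2.2.1 (supp_mem.2 h)

/-- The closed star of `a` inside the realization of `K`. -/
def Sset : Set K.realization :=
  {x | insert a (Finset.univ.filter fun b => x.1 b ≠ 0) ∈ K.faces}

lemma mem_Sset_of_ne {x : K.realization} (h : x.1 a ≠ 0) : x ∈ Sset K a := by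
  show insert a _ ∈ K.faces
  rw [Finset.insert_eq_self.2 (supp_mem.2 h)]
  exact x.2.2.2

lemma isClosed_Sset : IsClosed (Sset K a) := by
  have hE : Sset K a = ⋃ T ∈ {T : Finset α | insert a T ∈ K.faces},
      {x : K.realization | ∀ b, b ∉ T → x.1 b = 0} := by
    ext x
    simp only [Set.mem_iUnion, Set.mem_setOf_eq]
    constructor
    · intro hx
      refine ⟨_, hx, fun b hb => ?_⟩
      by_contra h
      exact hb (supp_mem.2 h)
    · rintro ⟨T, hT, hx⟩
      refine K.down_closed hT (Finset.insert_subset_insert _ ?_)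
      intro b hb
      by_contra hbT
      exact (supp_mem.1 hb) (hx b hbT)
  rw [hE]
  refine Set.Finite.isClosed_biUnion (Set.toFinite _) (fun T _ => ?_)
  have h2 : {x : K.realization | ∀ b, b ∉ T → x.1 b = 0}
      = ⋂ b ∈ {b | b ∉ T}, {x : K.realization | x.1 b = 0} := by
    ext x; simp
  rw [h2]
  refine isClosed_biInter fun b _ => isClosed_eq ?_ continuous_const
  exact (continuous_apply b).comp continuous_subtype_val

/-- The four closed pieces of `I × |K|` on which the homotopy is defined. -/
def E1set : Set (I × K.realization) :=
  {z | z.2.1 a = 0 ∨ (3/4 ≤ z.2.1 a ∧ (z.1 : ℝ) ≤ 1/2)}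

def E2set : Set (I × K.realization) := {z | z.2 ∈ Sset K a ∧ z.2.1 a ≤ 3/4}

def E3set : Set (I × K.realization) :=
  {z | 3/4 ≤ z.2.1 a ∧ 1/2 ≤ (z.1 : ℝ) ∧ (z.1 : ℝ) ≤ 3/4}

def E4set : Set (I × K.realization) := {z | 3/4 ≤ z.2.1 a ∧ 3/4 ≤ (z.1 : ℝ)}

end

/-! Reparametrization functions. -/

noncomputable def phibar (s : ℝ) : ℝ := min (max (3/4) (s + 1/4)) (min 1 (8 * (1 - s)))

noncomputable def phi (s t : ℝ) : ℝ := 4 * t / 3 * phibar s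

noncomputable def psi (s t : ℝ) : ℝ := 4 * t / 3 * max 0 (2 * (s - 3/4))

noncomputable def utime (s t : ℝ) : unitInterval :=
  Set.projIcc 0 1 zero_le_one (4 * psi s t)

lemma phibar_nonneg {s : ℝ} (h1 : s ≤ 1) : 0 ≤ phibar s :=
  le_min (le_trans (by norm_num) (le_max_left _ _)) (le_min zero_le_one (by linarith))

lemma phibar_le_one {s : ℝ} : phibar s ≤ 1 :=
  le_trans (min_le_right _ _) (min_le_left _ _)

lemma phi_nonneg {s t : ℝ} (hs : s ≤ 1) (ht : 0 ≤ t) : 0 ≤ phi s t :=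
  mul_nonneg (by linarith) (phibar_nonneg hs)

lemma phi_le_one {s t : ℝ} (hs : s ≤ 1) (ht0 : 0 ≤ t) (ht : t ≤ 3/4) : phi s t ≤ 1 := by
  have h1 : 4 * t / 3 ≤ 1 := by linarith
  have h2 := phibar_le_one (s := s)
  have h3 := phibar_nonneg hs
  have h4 := mul_le_mul h1 h2 h3 zero_le_one
  unfold phi; linarith

lemma phibar_low {s : ℝ} (h : s ≤ 1/2) : phibar s = 3/4 := by
  unfold phibar
  rw [max_eq_left (by linarith), min_eq_left (le_min (by norm_num) (by linarith))]

lemma phibar_mid {s : ℝ} (h1 : 1/2 ≤ s) (h2 : s ≤ 3/4) : phibar s = s + 1/4 := by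
  unfold phibar
  rw [max_eq_right (by linarith), min_eq_left (le_min (by linarith) (by linarith))]

lemma phibar_high {s : ℝ} (h1 : 3/4 ≤ s) : phibar s = min 1 (8 * (1 - s)) := by
  unfold phibar
  rw [max_eq_right (by linarith), min_eq_right (le_trans (min_le_left _ _) (by linarith))]

lemma psi_zero {s t : ℝ} (h : s ≤ 3/4) : psi s t = 0 := by
  unfold psi; rw [max_eq_left (by linarith), mul_zero]

lemma utime_zero {s t : ℝ} (h : s ≤ 3/4) : utime s t = 0 := by
  unfold utime
  rw [psi_zero h, mul_zero]
  exact Set.projIcc_left _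

lemma utime_one {s t : ℝ} (ht : t = 3/4) (hs : 7/8 ≤ s) : utime s t = 1 := by
  unfold utime psi
  rw [ht, max_eq_right (by linarith)]
  have h : (1:ℝ) ≤ 4 * (4 * (3/4) / 3 * (2 * (s - 3/4))) := by linarith
  rw [Set.projIcc_of_right_le _ h]
  rfl

section

variable (K : ASC α) (a : α)

/-- Normalized link coordinates of a point of the closed star with `t ≤ 3/4`. -/
noncomputable def Ymap (w : ↥(E2set K a)) : (K.link a).realization := by
  refine ⟨fun b => if b = a then 0 else w.1.2.1 b / (1 - w.1.2.1 a), ?_, ?_, ?_⟩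
  · intro b
    by_cases hb : b = a
    · simp [hb]
    · simp only [if_neg hb]
      exact div_nonneg (w.1.2.2.1 b) (by have := w.2.2; linarith)
  · have ht : w.1.2.1 a ≤ 3/4 := w.2.2
    have hne : (1 : ℝ) - w.1.2.1 a ≠ 0 := by intro h; rw [sub_eq_zero] at h; linarith [h.symm]
    have key : ∀ b, (if b = a then (0:ℝ) else w.1.2.1 b / (1 - w.1.2.1 a))
        = w.1.2.1 b / (1 - w.1.2.1 a) - (if b = a then w.1.2.1 b / (1 - w.1.2.1 a) else 0) := by
      intro b; by_cases hb : b = a <;> simp [hb]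
    rw [Finset.sum_congr rfl fun b _ => key b, Finset.sum_sub_distrib,
      ← Finset.sum_div, w.1.2.2.2.1]
    rw [Finset.sum_ite_eq' Finset.univ a fun b => w.1.2.1 b / (1 - w.1.2.1 a)]
    simp only [Finset.mem_univ, if_true]
    field_simp
  · have ht : w.1.2.1 a ≤ 3/4 := w.2.2
    have hne : (1 : ℝ) - w.1.2.1 a ≠ 0 := by intro h; rw [sub_eq_zero] at h; linarith [h.symm]
    have hsupp : (Finset.univ.filter fun b =>
          (if b = a then (0:ℝ) else w.1.2.1 b / (1 - w.1.2.1 a)) ≠ 0)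
        = (Finset.univ.filter fun b => w.1.2.1 b ≠ 0).erase a := by
      ext b
      simp only [Finset.mem_filter, Finset.mem_erase, Finset.mem_univ, true_and]
      by_cases hb : b = a
      · simp [hb]
      · simp only [if_neg hb, ne_eq, div_eq_zero_iff, hne, or_false]
        tauto
    rw [hsupp]
    refine ⟨K.down_closed w.1.2.2.2.2 (Finset.erase_subset _ _), Finset.notMem_erase _ _, ?_⟩
    have h3 : insert a ((Finset.univ.filter fun b => w.1.2.1 b ≠ 0).erase a)
        = insert a (Finset.univ.filter fun b => w.1.2.1 b ≠ 0) := by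
      ext b; simp only [Finset.mem_insert, Finset.mem_erase]; tauto
    rw [h3]
    exact w.2.1

lemma continuous_Ymap : Continuous (Ymap K a) := by
  apply Continuous.subtype_mk
  apply continuous_pi
  intro b
  have hxb : Continuous fun w : ↥(E2set K a) => w.1.2.1 b :=
    (continuous_apply b).comp (continuous_subtype_val.comp
      (continuous_snd.comp continuous_subtype_val))
  have hxa : Continuous fun w : ↥(E2set K a) => w.1.2.1 a :=
    (continuous_apply a).comp (continuous_subtype_val.comp
      (continuous_snd.comp continuous_subtype_val))
  by_cases hb : b = a
  · simp only [if_pos hb]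
    exact continuous_const
  · simp only [if_neg hb]
    refine hxb.div (continuous_const.sub hxa) (fun w => ?_)
    have := w.2.2
    intro h; rw [sub_eq_zero] at h; linarith [h.symm]

variable (p : (K.link a).realization)
variable (H : ContinuousMap.Homotopy (ContinuousMap.id ((K.link a).realization))
  (ContinuousMap.const _ p))

/-- The value of the homotopy on the region `t ≤ 3/4` of the closed star. -/
noncomputable def E2val (w : ↥(E2set K a)) : α → ℝ := fun b =>
  phi (w.1.1 : ℝ) (w.1.2.1 a) * (if b = a then 1 else 0) +
    (1 - phi (w.1.1 : ℝ) (w.1.2.1 a)) *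
      (H (utime (w.1.1 : ℝ) (w.1.2.1 a), Ymap K a w)).1 b

/-- The value of the homotopy on `t ≥ 3/4`, `1/2 ≤ s ≤ 3/4` (slide up the cone line). -/
noncomputable def E3val (z : I × K.realization) : α → ℝ := fun b =>
  if b = a then 1 - (1 - z.2.1 a) * (3 - 4 * (z.1 : ℝ))
  else (3 - 4 * (z.1 : ℝ)) * z.2.1 b

/-- The value of the homotopy on `t ≥ 3/4`, `s ≥ 3/4` (slide from apex to `p`). -/
noncomputable def E4val (z : I × K.realization) : α → ℝ := fun b =>
  if b = a then min 1 (8 * (1 - (z.1 : ℝ)))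
  else (1 - min 1 (8 * (1 - (z.1 : ℝ)))) * p.1 b

/-- The full homotopy, as a bare function into `α → ℝ`. -/
noncomputable def gg (z : I × K.realization) : α → ℝ :=
  if h1 : z.2.1 a = 0 ∨ (3/4 ≤ z.2.1 a ∧ (z.1 : ℝ) ≤ 1/2) then z.2.1
  else if h2 : z.2.1 a ≤ 3/4 then
    E2val K a p H ⟨z, mem_Sset_of_ne K a (not_or.1 h1).1, h2⟩
  else if (z.1 : ℝ) ≤ 3/4 then E3val K a z else E4val K a p z

lemma mem_realization_of {v : α → ℝ} (h1 : ∀ b, 0 ≤ v b) (h2 : ∑ b, v b = 1)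
    {sig : Finset α} (hsig : sig ∈ K.faces) (hsupp : ∀ b, v b ≠ 0 → b ∈ sig) :
    (∀ b, 0 ≤ v b) ∧ (∑ b, v b) = 1 ∧
      (Finset.univ.filter fun b => v b ≠ 0) ∈ K.faces :=
  ⟨h1, h2, K.down_closed hsig fun b hb => hsupp b (Finset.mem_filter.1 hb).2⟩

lemma E2val_mem (w : ↥(E2set K a)) :
    (∀ b, 0 ≤ E2val K a p H w b) ∧ (∑ b, E2val K a p H w b) = 1 ∧
      (Finset.univ.filter fun b => E2val K a p H w b ≠ 0) ∈ K.faces := by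
  have hs1 : (w.1.1 : ℝ) ≤ 1 := w.1.1.2.2
  have ht0 : 0 ≤ w.1.2.1 a := w.1.2.2.1 a
  have ht : w.1.2.1 a ≤ 3/4 := w.2.2
  set q := H (utime (w.1.1 : ℝ) (w.1.2.1 a), Ymap K a w) with hq
  have hq0 : ∀ b, 0 ≤ q.1 b := q.2.1
  have hq1 : ∑ b, q.1 b = 1 := q.2.2.1
  have hφ0 : 0 ≤ phi (w.1.1 : ℝ) (w.1.2.1 a) := phi_nonneg hs1 ht0
  have hφ1 : phi (w.1.1 : ℝ) (w.1.2.1 a) ≤ 1 := phi_le_one hs1 ht0 ht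
  refine mem_realization_of K ?_ ?_
    (sig := insert a (Finset.univ.filter fun b => q.1 b ≠ 0)) q.2.2.2.2.2 ?_
  · intro b
    refine add_nonneg (mul_nonneg hφ0 ?_) (mul_nonneg (by linarith) (hq0 b))
    split <;> norm_num
  · have key : ∀ b, E2val K a p H w b
        = (1 - phi (w.1.1 : ℝ) (w.1.2.1 a)) * q.1 b
          + (if b = a then phi (w.1.1 : ℝ) (w.1.2.1 a) else 0) := by
      intro b
      by_cases hb : b = a <;> simp [E2val, hb, ← hq] <;> ring
    rw [Finset.sum_congr rfl fun b _ => key b, Finset.sum_add_distrib, ← Finset.mul_sum, hq1,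
      Finset.sum_ite_eq' Finset.univ a fun _ => phi (w.1.1 : ℝ) (w.1.2.1 a)]
    simp only [Finset.mem_univ, if_true]
    ring
  · intro b hb
    by_cases hb' : b = a
    · subst hb'; exact Finset.mem_insert_self _ _
    · have : q.1 b ≠ 0 := by
        intro h0
        apply hb
        simp [E2val, hb', ← hq, h0]
      exact Finset.mem_insert_of_mem (Finset.mem_filter.2 ⟨Finset.mem_univ _, this⟩)

lemma E3val_mem (z : I × K.realization) (ht : 3/4 ≤ z.2.1 a)
    (hs1 : 1/2 ≤ (z.1 : ℝ)) (hs2 : (z.1 : ℝ) ≤ 3/4) :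
    (∀ b, 0 ≤ E3val K a z b) ∧ (∑ b, E3val K a z b) = 1 ∧
      (Finset.univ.filter fun b => E3val K a z b ≠ 0) ∈ K.faces := by
  have ht1 : z.2.1 a ≤ 1 := realization_le_one K z.2 a
  have hSm : z.2 ∈ Sset K a := mem_Sset_of_ne K a (by intro h; rw [h] at ht; linarith)
  refine mem_realization_of K ?_ ?_
    (sig := insert a (Finset.univ.filter fun b => z.2.1 b ≠ 0)) hSm ?_
  · intro b
    by_cases hb : b = a
    · simp only [E3val, if_pos hb]
      nlinarith
    · simp only [E3val, if_neg hb]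
      exact mul_nonneg (by linarith) (z.2.2.1 b)
  · have key : ∀ b, E3val K a z b = (3 - 4 * (z.1 : ℝ)) * z.2.1 b
        + (if b = a then (1 - (1 - z.2.1 a) * (3 - 4 * (z.1 : ℝ)))
            - (3 - 4 * (z.1 : ℝ)) * z.2.1 a else 0) := by
      intro b
      by_cases hb : b = a
      · subst hb; simp [E3val]
      · simp [E3val, hb]
    rw [Finset.sum_congr rfl fun b _ => key b, Finset.sum_add_distrib, ← Finset.mul_sum,
      z.2.2.2.1, Finset.sum_ite_eq' Finset.univ a]
    simp only [Finset.mem_univ, if_true]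
    ring
  · intro b hb
    by_cases hb' : b = a
    · subst hb'; exact Finset.mem_insert_self _ _
    · have : z.2.1 b ≠ 0 := by
        intro h0; apply hb; simp [E3val, hb', h0]
      exact Finset.mem_insert_of_mem (Finset.mem_filter.2 ⟨Finset.mem_univ _, this⟩)

lemma E4val_mem (z : I × K.realization) (hs : 3/4 ≤ (z.1 : ℝ)) :
    (∀ b, 0 ≤ E4val K a p z b) ∧ (∑ b, E4val K a p z b) = 1 ∧
      (Finset.univ.filter fun b => E4val K a p z b ≠ 0) ∈ K.faces := by
  have hs1 : (z.1 : ℝ) ≤ 1 := z.1.2.2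
  have hA0 : 0 ≤ min 1 (8 * (1 - (z.1 : ℝ))) := le_min zero_le_one (by linarith)
  have hA1 : min 1 (8 * (1 - (z.1 : ℝ))) ≤ 1 := min_le_left _ _
  have hpa : p.1 a = 0 := link_coord_zero K a p
  refine mem_realization_of K ?_ ?_
    (sig := insert a (Finset.univ.filter fun b => p.1 b ≠ 0)) p.2.2.2.2.2 ?_
  · intro b
    by_cases hb : b = a
    · simp only [E4val, if_pos hb]; exact hA0
    · simp only [E4val, if_neg hb]
      exact mul_nonneg (by linarith) (p.2.1 b)
  · have key : ∀ b, E4val K a p z b = (1 - min 1 (8 * (1 - (z.1 : ℝ)))) * p.1 b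
        + (if b = a then min 1 (8 * (1 - (z.1 : ℝ))) else 0) := by
      intro b
      by_cases hb : b = a
      · subst hb; simp [E4val, hpa]
      · simp [E4val, hb]
    rw [Finset.sum_congr rfl fun b _ => key b, Finset.sum_add_distrib, ← Finset.mul_sum,
      p.2.2.1, Finset.sum_ite_eq' Finset.univ a]
    simp only [Finset.mem_univ, if_true]
    ring
  · intro b hb
    by_cases hb' : b = a
    · subst hb'; exact Finset.mem_insert_self _ _
    · have : p.1 b ≠ 0 := by
        intro h0; apply hb; simp [E4val, hb', h0]
      exact Finset.mem_insert_of_mem (Finset.mem_filter.2 ⟨Finset.mem_univ _, this⟩)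

lemma gg_mem (z : I × K.realization) :
    (∀ b, 0 ≤ gg K a p H z b) ∧ (∑ b, gg K a p H z b) = 1 ∧
      (Finset.univ.filter fun b => gg K a p H z b ≠ 0) ∈ K.faces := by
  unfold gg
  split_ifs with h1 h2 h3
  · exact z.2.2
  · exact E2val_mem K a p H _
  · have ht : 3/4 ≤ z.2.1 a := le_of_lt (not_le.1 h2)
    have hs1 : 1/2 ≤ (z.1 : ℝ) := by
      by_contra h
      exact h1 (Or.inr ⟨ht, le_of_lt (not_le.1 h)⟩)
    exact E3val_mem K a z ht hs1 h3
  · exact E4val_mem K a p z (le_of_lt (not_le.1 h3))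

end

end StarAux

namespace StarAux

open ContinuousMap Set unitInterval

variable {α : Type} [Fintype α]

section

variable (K : ASC α) (a : α) (p : (K.link a).realization)
variable (H : ContinuousMap.Homotopy (ContinuousMap.id ((K.link a).realization))
  (ContinuousMap.const _ p))

lemma E2val_eq_self_of_zero (w : ↥(E2set K a)) (h0 : w.1.2.1 a = 0) :
    E2val K a p H w = w.1.2.1 := by
  funext b
  have hphi : phi (w.1.1 : ℝ) (w.1.2.1 a) = 0 := by rw [h0]; unfold phi; ring
  have hpsi : psi (w.1.1 : ℝ) (w.1.2.1 a) = 0 := by rw [h0]; unfold psi; ring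
  have hu : utime (w.1.1 : ℝ) (w.1.2.1 a) = 0 := by
    unfold utime; rw [hpsi, mul_zero]; exact Set.projIcc_left _
  simp only [E2val, hphi, hu, H.apply_zero, ContinuousMap.id_apply, zero_mul, zero_add,
    sub_zero, one_mul]
  show (if b = a then (0:ℝ) else w.1.2.1 b / (1 - w.1.2.1 a)) = w.1.2.1 b
  by_cases hb : b = a
  · rw [if_pos hb, hb, h0]
  · rw [if_neg hb, h0]
    norm_num

lemma E2val_eq_self_of_mid (w : ↥(E2set K a)) (h34 : w.1.2.1 a = 3/4)
    (hs : (w.1.1 : ℝ) ≤ 1/2) :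
    E2val K a p H w = w.1.2.1 := by
  funext b
  have hphi : phi (w.1.1 : ℝ) (w.1.2.1 a) = 3/4 := by
    unfold phi; rw [h34, phibar_low hs]; norm_num
  have hu : utime (w.1.1 : ℝ) (w.1.2.1 a) = 0 := utime_zero (by linarith)
  simp only [E2val, hphi, hu, H.apply_zero, ContinuousMap.id_apply]
  show 3/4 * (if b = a then (1:ℝ) else 0)
      + (1 - 3/4) * (if b = a then (0:ℝ) else w.1.2.1 b / (1 - w.1.2.1 a)) = w.1.2.1 b
  by_cases hb : b = a
  · rw [if_pos hb, if_pos hb, hb, h34]; norm_num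
  · rw [if_neg hb, if_neg hb, h34]
    field_simp
    ring

lemma gg_eq_E2val (w : ↥(E2set K a)) : gg K a p H w.1 = E2val K a p H w := by
  obtain ⟨hS, ht⟩ := w.2
  unfold gg
  split_ifs with h1 h2
  · rcases h1 with h0 | ⟨h34, hs⟩
    · exact (E2val_eq_self_of_zero K a p H w h0).symm
    · exact (E2val_eq_self_of_mid K a p H w (le_antisymm ht h34) hs).symm
  · rfl

lemma gg_eq_E3val {z : I × K.realization} (hz : z ∈ E3set K a) :
    gg K a p H z = E3val K a z := by
  obtain ⟨ht, hs1, hs2⟩ := hz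
  have hx1 : z.2.1 a ≤ 1 := realization_le_one K z.2 a
  unfold gg
  split_ifs with h1 h2
  · rcases h1 with h0 | ⟨_, hs⟩
    · exfalso; rw [h0] at ht; linarith
    · have hs' : (z.1 : ℝ) = 1/2 := le_antisymm hs hs1
      funext b
      unfold E3val
      by_cases hb : b = a
      · rw [if_pos hb, hb, hs']; ring
      · rw [if_neg hb, hs']; ring
  · -- t = 3/4 : E2val agrees with E3val
    have ht' : z.2.1 a = 3/4 := le_antisymm h2 ht
    funext b
    have hphi : phi (z.1 : ℝ) (z.2.1 a) = (z.1 : ℝ) + 1/4 := by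
      unfold phi; rw [ht', phibar_mid hs1 hs2]; ring
    have hu : utime (z.1 : ℝ) (z.2.1 a) = 0 := utime_zero hs2
    simp only [E2val, hphi, hu, H.apply_zero, ContinuousMap.id_apply, E3val]
    show ((z.1 : ℝ) + 1/4) * (if b = a then (1:ℝ) else 0)
        + (1 - ((z.1 : ℝ) + 1/4)) * (if b = a then (0:ℝ) else z.2.1 b / (1 - z.2.1 a))
        = if b = a then 1 - (1 - z.2.1 a) * (3 - 4 * (z.1 : ℝ))
          else (3 - 4 * (z.1 : ℝ)) * z.2.1 b
    by_cases hb : b = a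
    · rw [if_pos hb, if_pos hb, if_pos hb, ht']; ring
    · rw [if_neg hb, if_neg hb, if_neg hb, ht']
      field_simp
      ring
  · rfl

lemma gg_eq_E4val {z : I × K.realization} (hz : z ∈ E4set K a) :
    gg K a p H z = E4val K a p z := by
  obtain ⟨ht, hs⟩ := hz
  unfold gg
  split_ifs with h1 h2 h3
  · rcases h1 with h0 | ⟨_, hs'⟩
    · exfalso; rw [h0] at ht; linarith
    · linarith
  · -- t = 3/4 : E2val agrees with E4val
    have ht' : z.2.1 a = 3/4 := le_antisymm h2 ht
    funext b
    have hphi : phi (z.1 : ℝ) (z.2.1 a) = min 1 (8 * (1 - (z.1 : ℝ))) := by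
      unfold phi; rw [ht', phibar_high hs]; ring
    by_cases hb : b = a
    · have hqa : (H (utime (z.1 : ℝ) (z.2.1 a),
          Ymap K a ⟨z, mem_Sset_of_ne K a (not_or.1 h1).1, h2⟩)).1 a = 0 :=
        link_coord_zero K a _
      simp only [E2val, E4val, if_pos hb, hphi]
      rw [hb, hqa]
      ring
    · simp only [E2val, E4val, if_neg hb, hphi]
      by_cases hs7 : (z.1 : ℝ) ≤ 7/8
      · have hm : min 1 (8 * (1 - (z.1 : ℝ))) = 1 := min_eq_left (by linarith)
        rw [hm]; ring
      · have hu1 : utime (z.1 : ℝ) (z.2.1 a) = 1 := utime_one ht' (by linarith)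
        rw [hu1, H.apply_one]
        simp only [ContinuousMap.const_apply]
        ring
  · -- s = 3/4 : E3val agrees with E4val
    have hs' : (z.1 : ℝ) = 3/4 := le_antisymm h3 hs
    funext b
    unfold E3val E4val
    by_cases hb : b = a
    · rw [if_pos hb, if_pos hb, hs']; norm_num
    · rw [if_neg hb, if_neg hb, hs']; norm_num
  · rfl

lemma continuous_E2val : Continuous (E2val K a p H) := by
  have hs : Continuous fun w : ↥(E2set K a) => (w.1.1 : ℝ) :=
    continuous_subtype_val.comp (continuous_fst.comp continuous_subtype_val)
  have ht : Continuous fun w : ↥(E2set K a) => w.1.2.1 a := by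
    exact (continuous_apply a).comp (continuous_subtype_val.comp
      (continuous_snd.comp continuous_subtype_val))
  have hphi : Continuous fun w : ↥(E2set K a) => phi (w.1.1 : ℝ) (w.1.2.1 a) := by
    unfold phi phibar
    fun_prop
  have hu : Continuous fun w : ↥(E2set K a) => utime (w.1.1 : ℝ) (w.1.2.1 a) := by
    unfold utime psi
    exact continuous_projIcc.comp (by fun_prop)
  have hq : Continuous fun w : ↥(E2set K a) =>
      H (utime (w.1.1 : ℝ) (w.1.2.1 a), Ymap K a w) :=
    H.continuous.comp (hu.prodMk (continuous_Ymap K a))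
  apply continuous_pi
  intro b
  have hqb : Continuous fun w : ↥(E2set K a) =>
      (H (utime (w.1.1 : ℝ) (w.1.2.1 a), Ymap K a w)).1 b :=
    (continuous_apply b).comp (continuous_subtype_val.comp hq)
  exact (hphi.mul continuous_const).add ((continuous_const.sub hphi).mul hqb)

lemma continuous_E3val : Continuous (E3val K a) := by
  apply continuous_pi
  intro b
  have hs : Continuous fun z : I × K.realization => (z.1 : ℝ) :=
    continuous_subtype_val.comp continuous_fst
  have hta : Continuous fun z : I × K.realization => z.2.1 a := by
    exact (continuous_apply a).comp (continuous_subtype_val.comp continuous_snd)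
  have htb : Continuous fun z : I × K.realization => z.2.1 b := by
    exact (continuous_apply b).comp (continuous_subtype_val.comp continuous_snd)
  unfold E3val
  by_cases hb : b = a
  · simp only [if_pos hb]
    fun_prop
  · simp only [if_neg hb]
    fun_prop

lemma continuous_E4val : Continuous (E4val K a p) := by
  apply continuous_pi
  intro b
  have hs : Continuous fun z : I × K.realization => (z.1 : ℝ) :=
    continuous_subtype_val.comp continuous_fst
  unfold E4val
  by_cases hb : b = a
  · simp only [if_pos hb]
    fun_prop
  · simp only [if_neg hb]
    fun_prop

lemma isClosed_E1set : IsClosed (E1set K a) := by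
  have hta : Continuous fun z : I × K.realization => z.2.1 a := by
    exact (continuous_apply a).comp (continuous_subtype_val.comp continuous_snd)
  have hs : Continuous fun z : I × K.realization => (z.1 : ℝ) :=
    continuous_subtype_val.comp continuous_fst
  exact (isClosed_eq hta continuous_const).union
    ((isClosed_le continuous_const hta).inter (isClosed_le hs continuous_const))

lemma isClosed_E2set : IsClosed (E2set K a) := by
  have hta : Continuous fun z : I × K.realization => z.2.1 a := by
    exact (continuous_apply a).comp (continuous_subtype_val.comp continuous_snd)
  exact ((isClosed_Sset K a).preimage continuous_snd).inter
    (isClosed_le hta continuous_const)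

lemma isClosed_E3set : IsClosed (E3set K a) := by
  have hta : Continuous fun z : I × K.realization => z.2.1 a := by
    exact (continuous_apply a).comp (continuous_subtype_val.comp continuous_snd)
  have hs : Continuous fun z : I × K.realization => (z.1 : ℝ) :=
    continuous_subtype_val.comp continuous_fst
  exact (isClosed_le continuous_const hta).inter
    ((isClosed_le continuous_const hs).inter (isClosed_le hs continuous_const))

lemma isClosed_E4set : IsClosed (E4set K a) := by
  have hta : Continuous fun z : I × K.realization => z.2.1 a := by
    exact (continuous_apply a).comp (continuous_subtype_val.comp continuous_snd)
  have hs : Continuous fun z : I × K.realization => (z.1 : ℝ) :=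
    continuous_subtype_val.comp continuous_fst
  exact (isClosed_le continuous_const hta).inter (isClosed_le continuous_const hs)

lemma continuous_gg : Continuous (gg K a p H) := by
  set F : Fin 4 → Set (I × K.realization) := ![E1set K a, E2set K a, E3set K a, E4set K a]
    with hF
  have hcov : ⋃ i, F i = Set.univ := by
    ext z
    simp only [Set.mem_iUnion, Set.mem_univ, iff_true]
    by_cases h0 : z.2.1 a = 0
    · exact ⟨0, Or.inl h0⟩
    by_cases h2 : z.2.1 a ≤ 3/4
    · exact ⟨1, mem_Sset_of_ne K a h0, h2⟩
    have ht : 3/4 ≤ z.2.1 a := le_of_lt (not_le.1 h2)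
    rcases le_total (z.1 : ℝ) (1/2) with hs | hs
    · exact ⟨0, Or.inr ⟨ht, hs⟩⟩
    rcases le_total (z.1 : ℝ) (3/4) with hs2 | hs2
    · exact ⟨2, ht, hs, hs2⟩
    · exact ⟨3, ht, hs2⟩
  have hcl : ∀ i, IsClosed (F i) := by
    intro i
    fin_cases i
    · exact isClosed_E1set K a
    · exact isClosed_E2set K a
    · exact isClosed_E3set K a
    · exact isClosed_E4set K a
  refine LocallyFinite.continuous (locallyFinite_of_finite F) hcov hcl ?_
  intro i
  fin_cases i
  · -- E1
    show ContinuousOn (gg K a p H) (E1set K a)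
    refine ContinuousOn.congr (f := fun z : I × K.realization => z.2.1) ?_ ?_
    · exact (continuous_subtype_val.comp continuous_snd).continuousOn
    · intro z hz
      exact dif_pos hz
  · -- E2
    show ContinuousOn (gg K a p H) (E2set K a)
    rw [continuousOn_iff_continuous_restrict]
    have he : Set.restrict (E2set K a) (gg K a p H) = E2val K a p H := by
      funext w
      exact gg_eq_E2val K a p H w
    change Continuous (Set.restrict (E2set K a) (gg K a p H))
    rw [he]
    exact continuous_E2val K a p H
  · -- E3
    show ContinuousOn (gg K a p H) (E3set K a)
    exact (continuous_E3val K a).continuousOn.congr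
      (fun z hz => gg_eq_E3val K a p H hz)
  · -- E4
    show ContinuousOn (gg K a p H) (E4set K a)
    exact (continuous_E4val K a p).continuousOn.congr
      (fun z hz => gg_eq_E4val K a p H hz)

/-- The homotopy packaged as a continuous map into `|K|`. -/
noncomputable def GG : C(I × K.realization, K.realization) :=
  ⟨fun z => ⟨gg K a p H z, gg_mem K a p H z⟩, (continuous_gg K a p H).subtype_mk _⟩

lemma gg_zero (x : K.realization) : gg K a p H ((0 : I), x) = x.1 := by
  have h00 : (((0 : I), x).1 : ℝ) = 0 := rfl
  unfold gg
  split_ifs with h1 h2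
  · rfl
  · -- E2 branch at s = 0
    funext b
    have hphi : phi (((0 : I), x).1 : ℝ) (x.1 a) = x.1 a := by
      unfold phi; rw [h00, phibar_low (by norm_num)]; ring
    have hu : utime (((0 : I), x).1 : ℝ) (x.1 a) = 0 :=
      utime_zero (by rw [h00]; norm_num)
    have hxa : x.1 a ≤ 3/4 := h2
    simp only [E2val, hphi, hu, H.apply_zero, ContinuousMap.id_apply]
    show x.1 a * (if b = a then (1:ℝ) else 0)
        + (1 - x.1 a) * (if b = a then (0:ℝ) else x.1 b / (1 - x.1 a)) = x.1 b
    have hne : (1 : ℝ) - x.1 a ≠ 0 := by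
      intro h; rw [sub_eq_zero] at h; linarith [h.symm]
    by_cases hb : b = a
    · rw [if_pos hb, if_pos hb, hb]; ring
    · rw [if_neg hb, if_neg hb]
      field_simp
      ring
  all_goals
    exact absurd (Or.inr ⟨le_of_lt (not_le.1 h2), by rw [h00]; norm_num⟩) h1

lemma gg_one_a (x : K.realization) : gg K a p H ((1 : I), x) a = 0 := by
  have h11 : (((1 : I), x).1 : ℝ) = 1 := rfl
  unfold gg
  split_ifs with h1 h2 h3
  · rcases h1 with h0 | ⟨_, hs⟩
    · exact h0
    · rw [h11] at hs; norm_num at hs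
  · have hphi : phi (((1 : I), x).1 : ℝ) (x.1 a) = 0 := by
      unfold phi
      have hb1 : phibar (((1 : I), x).1 : ℝ) = 0 := by
        rw [h11]; unfold phibar; norm_num
      rw [hb1]; ring
    have hqa : (H (utime (((1 : I), x).1 : ℝ) (x.1 a),
        Ymap K a ⟨((1 : I), x), mem_Sset_of_ne K a (not_or.1 h1).1, h2⟩)).1 a = 0 :=
      link_coord_zero K a _
    simp only [E2val, hphi, if_pos rfl]
    rw [hqa]
    ring
  · exfalso; rw [h11] at h3; norm_num at h3
  · unfold E4val
    rw [if_pos rfl, h11]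
    norm_num

lemma delStar_coord_zero (x : (K.delStar a).realization) : x.1 a = 0 := by
  by_contra h
  exact x.2.2.2.2 (supp_mem.2 h)

/-- The retraction `|K| → |K \ St a|`. -/
noncomputable def gmap : C(K.realization, (K.delStar a).realization) where
  toFun x := ⟨gg K a p H ((1 : I), x), (gg_mem K a p H ((1 : I), x)).1,
    (gg_mem K a p H ((1 : I), x)).2.1,
    ⟨(gg_mem K a p H ((1 : I), x)).2.2, by
      intro hmem
      exact (supp_mem.1 hmem) (gg_one_a K a p H x)⟩⟩
  continuous_toFun := by
    apply Continuous.subtype_mk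
    exact (continuous_gg K a p H).comp (continuous_const.prodMk continuous_id)

/-- The inclusion `|K \ St a| → |K|`. -/
noncomputable def imap : C((K.delStar a).realization, K.realization) where
  toFun x := ⟨x.1, x.2.1, x.2.2.1, x.2.2.2.1⟩
  continuous_toFun := by
    apply Continuous.subtype_mk
    exact continuous_subtype_val

/-- The big homotopy between the identity of `|K|` and the composite
`|K| → |K \ St a| → |K|`. -/
noncomputable def bigHomotopy :
    ContinuousMap.Homotopy (ContinuousMap.id K.realization)
      ((imap K a).comp (gmap K a p H)) where
  toContinuousMap := GG K a p H
  map_zero_left x := Subtype.ext (gg_zero K a p H x)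
  map_one_left x := Subtype.ext rfl

end

end StarAux

/-- If the link of a vertex `a` of a simplicial complex `K` is contractible,
then `|K|` is homotopy equivalent to `|K \ St a|`. -/
theorem stmt0 {α : Type} [Fintype α] (K : ASC α) (a : α)
    (ha : K.IsVertex a)
    (hlink : ContractibleSpace (ASC.realization (K.link a))) :
    Nonempty (ContinuousMap.HomotopyEquiv K.realization
      (ASC.realization (K.delStar a))) := by
  obtain ⟨p, hp⟩ := id_nullhomotopic (ASC.realization (K.link a))
  obtain ⟨H⟩ := hp
  have hretract : (StarAux.gmap K a p H).comp (StarAux.imap K a) = ContinuousMap.id _ := by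
    apply ContinuousMap.ext
    intro x
    apply Subtype.ext
    show StarAux.gg K a p H ((1 : unitInterval), StarAux.imap K a x) = x.1
    unfold StarAux.gg
    have h0 : ((1 : unitInterval), StarAux.imap K a x).2.1 a = 0 :=
      StarAux.delStar_coord_zero K a x
    split_ifs with h1 h2
    all_goals first
      | rfl
      | exact absurd (Or.inl h0) h1
  exact ⟨{ toFun := StarAux.gmap K a p H
           invFun := StarAux.imap K a
           left_inv := ⟨(StarAux.bigHomotopy K a p H).symm⟩
           right_inv := by
             rw [hretract] }⟩
end

section
/- Let P be an n-dimensional Delzant polytope and F a proper face of P which is the intersection of facets F_1, ..., F_k with outward primitive integral normal vectors λ(F_1), ..., λ(F_k). Then the polytope obtained by truncating P along F using a hyperplane with normal vector λ(F_1) + ... + λ(F_k) is again a Delzant polytope. -/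
/-- The polytope determined by outward normal vectors `ν j` and support values `c j`. -/
def polytopeOf {n m : ℕ} (ν : Fin m → Fin n → ℤ) (c : Fin m → ℝ) : Set (Fin n → ℝ) :=
  {x | ∀ j, (∑ i, (ν j i : ℝ) * x i) ≤ c j}

open Classical in
/-- The set of inequalities active at a point `x`. -/
noncomputable def activeSet {n m : ℕ} (ν : Fin m → Fin n → ℤ) (c : Fin m → ℝ)
    (x : Fin n → ℝ) : Finset (Fin m) :=
  Finset.univ.filter fun j => (∑ i, (ν j i : ℝ) * x i) = c j

/-- The presentation `(ν, c)` defines a Delzant polytope: the polytope is compact and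
nonempty, at every point at most `n` inequalities are active (simplicity), and at each
vertex the `n` active outward integral normal vectors form a `ℤ`-basis of `ℤ^n`
(equivalently, they span `ℤ^n` over `ℤ`). -/
def IsDelzantPresentation {n m : ℕ} (ν : Fin m → Fin n → ℤ) (c : Fin m → ℝ) : Prop :=
  IsCompact (polytopeOf ν c) ∧ (polytopeOf ν c).Nonempty ∧
    ∀ x ∈ polytopeOf ν c,
      (activeSet ν c x).card ≤ n ∧
      ((activeSet ν c x).card = n →
        Submodule.span ℤ (ν '' (activeSet ν c x : Set (Fin m))) = ⊤)

lemma mem_activeSet {n m : ℕ} (ν : Fin m → Fin n → ℤ) (c : Fin m → ℝ) (x : Fin n → ℝ)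
    (j : Fin m) : j ∈ activeSet ν c x ↔ (∑ i, (ν j i : ℝ) * x i) = c j := by
  simp [activeSet]

/-- Truncating a Delzant polytope along a proper face `F` (the intersection
of the facets indexed by `S`), using a hyperplane with normal vector `∑_{j ∈ S} ν j` and a
support value slightly less than the value attained on `F`, again yields a Delzant polytope. -/
theorem stmt5 {n m : ℕ} (ν : Fin m → Fin n → ℤ) (c : Fin m → ℝ)
    (hP : IsDelzantPresentation ν c) (S : Finset (Fin m)) (hS : S.Nonempty)
    (hF : {x ∈ polytopeOf ν c | ∀ j ∈ S, (∑ i, (ν j i : ℝ) * x i) = c j}.Nonempty)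
    (hFproper : {x ∈ polytopeOf ν c | ∀ j ∈ S, (∑ i, (ν j i : ℝ) * x i) = c j} ≠
      polytopeOf ν c) :
    ∃ ε > (0 : ℝ), ∀ c0 : ℝ, (∑ j ∈ S, c j) - ε < c0 → c0 < ∑ j ∈ S, c j →
      IsDelzantPresentation (Fin.snoc ν (∑ j ∈ S, ν j)) (Fin.snoc c c0) := by
  classical
  obtain ⟨hPc, hPne, hPdel⟩ := hP
  set P := polytopeOf ν c with hPdef
  set F := {x ∈ polytopeOf ν c | ∀ j ∈ S, (∑ i, (ν j i : ℝ) * x i) = c j} with hFdef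
  set f : (Fin n → ℝ) → ℝ := fun x => ∑ j ∈ S, ∑ i, (ν j i : ℝ) * x i with hfdef
  have hlin : ∀ j : Fin m, Continuous fun x : Fin n → ℝ => ∑ i, (ν j i : ℝ) * x i := by
    intro j
    exact continuous_finset_sum _ fun i _ => (continuous_const.mul (continuous_apply i))
  have hfcont : Continuous f := continuous_finset_sum _ fun j _ => hlin j
  have hfle : ∀ x ∈ P, f x ≤ ∑ j ∈ S, c j := fun x hx =>
    Finset.sum_le_sum fun j _ => hx j
  have hflt : ∀ x ∈ P, x ∉ F → f x < ∑ j ∈ S, c j := by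
    intro x hxP hxF
    have hne : ∃ j ∈ S, (∑ i, (ν j i : ℝ) * x i) ≠ c j := by
      by_contra h
      push_neg at h
      exact hxF ⟨hxP, h⟩
    obtain ⟨j₀, hj₀S, hj₀⟩ := hne
    exact Finset.sum_lt_sum (fun j _ => hxP j) ⟨j₀, hj₀S, lt_of_le_of_ne (hxP j₀) hj₀⟩
  -- a point of P off F
  have hnotsub : ¬ P ⊆ F := by
    intro h
    exact hFproper (Set.Subset.antisymm (fun x hx => hx.1) h)
  obtain ⟨y₀, hy₀P, hy₀F⟩ := Set.not_subset.mp hnotsub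
  -- faces of P
  set Q : Finset (Fin m) → Set (Fin n → ℝ) :=
    fun B => {x ∈ P | ∀ j ∈ B, (∑ i, (ν j i : ℝ) * x i) = c j} with hQdef
  have hQcomp : ∀ B, IsCompact (Q B) := by
    intro B
    have hcl : IsClosed {x : Fin n → ℝ | ∀ j ∈ B, (∑ i, (ν j i : ℝ) * x i) = c j} := by
      have : {x : Fin n → ℝ | ∀ j ∈ B, (∑ i, (ν j i : ℝ) * x i) = c j} =
          ⋂ j ∈ B, {x | (∑ i, (ν j i : ℝ) * x i) = c j} := by
        ext x; simp
      rw [this]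
      exact isClosed_biInter fun j _ => isClosed_eq (hlin j) continuous_const
    exact hPc.inter_right hcl
  set s : Finset (Fin m) → Set (Fin n → ℝ) :=
    fun B => if (Q B ∩ F).Nonempty then ∅ else Q B with hsdef
  set K : Set (Fin n → ℝ) := insert y₀ (⋃ B : Finset (Fin m), s B) with hKdef
  have hKcomp : IsCompact K := by
    refine IsCompact.insert ?_ y₀
    refine isCompact_iUnion fun B => ?_
    by_cases h : (Q B ∩ F).Nonempty
    · simp [hsdef, h]
    · simpa [hsdef, h] using hQcomp B
  have hKsub : ∀ w ∈ K, w ∈ P ∧ w ∉ F := by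
    intro w hw
    rcases hw with rfl | hw
    · exact ⟨hy₀P, hy₀F⟩
    · obtain ⟨t, ⟨B, rfl⟩, hwB⟩ := hw
      by_cases h : (Q B ∩ F).Nonempty
      · simp [hsdef, h] at hwB
      · rw [hsdef] at hwB
        simp only [h, if_false] at hwB
        refine ⟨hwB.1, fun hwF => h ⟨w, hwB, hwF⟩⟩
  have hKne : K.Nonempty := ⟨y₀, Or.inl rfl⟩
  obtain ⟨z, hzK, hzmax⟩ := hKcomp.exists_isMaxOn hKne hfcont.continuousOn
  have hzlt : f z < ∑ j ∈ S, c j := hflt z (hKsub z hzK).1 (hKsub z hzK).2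
  refine ⟨(∑ j ∈ S, c j) - f z, by linarith, ?_⟩
  intro c0 hc0l hc0r
  have hzc0 : f z < c0 := by linarith
  set w : Fin n → ℤ := ∑ j ∈ S, ν j with hwdef
  set ν' : Fin (m + 1) → Fin n → ℤ := Fin.snoc ν w with hν'def
  set c' : Fin (m + 1) → ℝ := Fin.snoc c c0 with hc'def
  have hgf : ∀ x : Fin n → ℝ, (∑ i, (w i : ℝ) * x i) = f x := by
    intro x
    calc ∑ i, (w i : ℝ) * x i = ∑ i, ∑ j ∈ S, (ν j i : ℝ) * x i := by
          refine Finset.sum_congr rfl fun i _ => ?_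
          rw [hwdef]
          push_cast [Finset.sum_apply]
          rw [Finset.sum_mul]
      _ = ∑ j ∈ S, ∑ i, (ν j i : ℝ) * x i := Finset.sum_comm
      _ = f x := rfl
  have hmem' : ∀ x, x ∈ polytopeOf ν' c' ↔ x ∈ P ∧ f x ≤ c0 := by
    intro x
    constructor
    · intro h
      refine ⟨fun j => ?_, ?_⟩
      · have := h j.castSucc
        simpa [hν'def, hc'def] using this
      · have := h (Fin.last m)
        rw [show ν' (Fin.last m) = w from Fin.snoc_last .. ,
          show c' (Fin.last m) = c0 from Fin.snoc_last ..] at this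
        rwa [hgf x] at this
    · rintro ⟨h1, h2⟩ j
      refine Fin.lastCases ?_ ?_ j
      · rw [show ν' (Fin.last m) = w from Fin.snoc_last ..,
          show c' (Fin.last m) = c0 from Fin.snoc_last .., hgf x]
        exact h2
      · intro i
        simpa [hν'def, hc'def] using h1 i
  -- active sets of the truncation
  have hA'lt : ∀ x, f x ≠ c0 →
      activeSet ν' c' x = (activeSet ν c x).image Fin.castSucc := by
    intro x hx
    ext j
    refine Fin.lastCases ?_ ?_ j
    · simp only [mem_activeSet, Finset.mem_image]
      rw [show ν' (Fin.last m) = w from Fin.snoc_last ..,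
        show c' (Fin.last m) = c0 from Fin.snoc_last .., hgf x]
      constructor
      · intro h; exact absurd h hx
      · rintro ⟨i, _, hi⟩
        exact absurd hi (Fin.castSucc_lt_last i).ne
    · intro i
      simp only [mem_activeSet, Finset.mem_image]
      constructor
      · intro h
        refine ⟨i, ?_, rfl⟩
        simpa [hν'def, hc'def] using h
      · rintro ⟨i', hi', hii⟩
        have : i' = i := Fin.castSucc_injective _ hii
        subst this
        simpa [hν'def, hc'def] using hi'
  have hA'eq : ∀ x, f x = c0 →
      activeSet ν' c' x = insert (Fin.last m) ((activeSet ν c x).image Fin.castSucc) := by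
    intro x hx
    ext j
    refine Fin.lastCases ?_ ?_ j
    · simp only [mem_activeSet, Finset.mem_insert, true_or, iff_true]
      rw [show ν' (Fin.last m) = w from Fin.snoc_last ..,
        show c' (Fin.last m) = c0 from Fin.snoc_last .., hgf x]
      exact hx
    · intro i
      simp only [mem_activeSet, Finset.mem_insert, Finset.mem_image]
      have hne : Fin.castSucc i ≠ Fin.last m := (Fin.castSucc_lt_last i).ne
      constructor
      · intro h
        refine Or.inr ⟨i, ?_, rfl⟩
        simpa [hν'def, hc'def] using h
      · rintro (h | ⟨i', hi', hii⟩)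
        · exact absurd h hne
        · have : i' = i := Fin.castSucc_injective _ hii
          subst this
          simpa [hν'def, hc'def] using hi'
  have himg : ∀ A : Finset (Fin m),
      ν' '' ((A.image Fin.castSucc : Finset (Fin (m+1))) : Set (Fin (m+1))) =
        ν '' (A : Set (Fin m)) := by
    intro A
    rw [Finset.coe_image, Set.image_image]
    refine Set.image_congr fun j _ => ?_
    simp [hν'def]
  have hlastnot : ∀ A : Finset (Fin m), Fin.last m ∉ A.image Fin.castSucc := by
    intro A h
    obtain ⟨i, _, hi⟩ := Finset.mem_image.mp h
    exact (Fin.castSucc_lt_last i).ne hi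
  constructor
  · -- compactness
    have : polytopeOf ν' c' = P ∩ {x | f x ≤ c0} := by
      ext x; exact hmem' x
    rw [this]
    exact hPc.inter_right (isClosed_le hfcont continuous_const)
  constructor
  · -- nonempty
    refine ⟨y₀, (hmem' y₀).mpr ⟨hy₀P, ?_⟩⟩
    have : f y₀ ≤ f z := hzmax (Or.inl rfl)
    linarith
  · intro x hx
    obtain ⟨hxP, hxle⟩ := (hmem' x).mp hx
    rcases lt_or_eq_of_le hxle with hxlt | hxeq
    · -- new constraint inactive
      rw [hA'lt x hxlt.ne]
      rw [Finset.card_image_of_injective _ (Fin.castSucc_injective m), himg]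
      exact hPdel x hxP
    · -- new constraint active
      set A := activeSet ν c x with hAdef
      have hxQ : x ∈ Q A := ⟨hxP, fun j hj => (mem_activeSet ν c x j).mp hj⟩
      have hQF : (Q A ∩ F).Nonempty := by
        by_contra h
        have hxK : x ∈ K := by
          refine Or.inr (Set.mem_iUnion.mpr ⟨A, ?_⟩)
          rw [hsdef]
          simpa [h] using hxQ
        have : f x ≤ f z := hzmax hxK
        linarith [hxeq, hzc0]
      obtain ⟨y, hyQ, hyF⟩ := hQF
      have hAy : A ⊆ activeSet ν c y := fun j hj =>
        (mem_activeSet ν c y j).mpr (hyQ.2 j hj)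
      have hSy : S ⊆ activeSet ν c y := fun j hj =>
        (mem_activeSet ν c y j).mpr (hyF.2 j hj)
      -- a constraint in S strict at x
      have hxnF : x ∉ F := by
        intro hxF
        have : f x = ∑ j ∈ S, c j := Finset.sum_congr rfl fun j hj => hxF.2 j hj
        linarith [hxeq]
      have hj₀ : ∃ j₀ ∈ S, j₀ ∉ A := by
        by_contra h
        push_neg at h
        exact hxnF ⟨hxP, fun j hj => (mem_activeSet ν c x j).mp (h j hj)⟩
      obtain ⟨j₀, hj₀S, hj₀A⟩ := hj₀
      have hins : insert j₀ A ⊆ activeSet ν c y :=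
        Finset.insert_subset (hSy hj₀S) hAy
      have hycard : (activeSet ν c y).card ≤ n := (hPdel y hyQ.1).1
      have hcardA : A.card + 1 ≤ n := by
        calc A.card + 1 = (insert j₀ A).card := (Finset.card_insert_of_notMem hj₀A).symm
        _ ≤ (activeSet ν c y).card := Finset.card_le_card hins
        _ ≤ n := hycard
      rw [hA'eq x hxeq]
      have hcard' : (insert (Fin.last m) (A.image Fin.castSucc)).card = A.card + 1 := by
        rw [Finset.card_insert_of_notMem (hlastnot A),
          Finset.card_image_of_injective _ (Fin.castSucc_injective m)]
      constructor
      · rw [hcard']; exact hcardA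
      · intro hcardn
        rw [hcard'] at hcardn
        -- the active set at y equals insert j₀ A
        have hAyeq : activeSet ν c y = insert j₀ A := by
          refine (Finset.eq_of_subset_of_card_le hins ?_).symm
          rw [Finset.card_insert_of_notMem hj₀A, hcardn]
          exact hycard
        have hspan : Submodule.span ℤ (ν '' ((activeSet ν c y : Set (Fin m)))) = ⊤ := by
          refine (hPdel y hyQ.1).2 ?_
          rw [hAyeq, Finset.card_insert_of_notMem hj₀A, hcardn]
        -- compute the image of the new active set
        have himg' : ν' '' ((insert (Fin.last m) (A.image Fin.castSucc) :
            Finset (Fin (m+1))) : Set (Fin (m+1))) =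
            insert w (ν '' (A : Set (Fin m))) := by
          rw [Finset.coe_insert, Set.image_insert_eq, himg A]
          congr 1
          exact Fin.snoc_last ..
        rw [himg']
        refine top_unique ?_
        rw [← hspan]
        refine Submodule.span_le.mpr ?_
        rintro v ⟨j, hjy, rfl⟩
        rw [hAyeq] at hjy
        rcases Finset.mem_insert.mp hjy with rfl | hjA
        · -- ν j₀ = w - ∑ over S.erase j₀ of ν
          have hsum : ν j + ∑ j' ∈ S.erase j, ν j' = w := Finset.add_sum_erase S ν hj₀S
          have : ν j = w - ∑ j' ∈ S.erase j, ν j' := by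
            rw [← hsum]; abel
          rw [this]
          refine Submodule.sub_mem _ (Submodule.subset_span (Set.mem_insert _ _)) ?_
          refine Submodule.sum_mem _ fun j' hj' => ?_
          obtain ⟨hne, hj'S⟩ := Finset.mem_erase.mp hj'
          have hj'A : j' ∈ A := by
            have := hSy hj'S
            rw [hAyeq] at this
            rcases Finset.mem_insert.mp this with h | h
            · exact absurd h hne
            · exact h
          exact Submodule.subset_span (Set.mem_insert_of_mem _ ⟨j', hj'A, rfl⟩)
        · exact Submodule.subset_span (Set.mem_insert_of_mem _ ⟨j, hjA, rfl⟩)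
end

section
/- Let G be a pseudograph and C ∈ 2^{C_G}_even with connected components Γ^1, ..., Γ^q of Γ̃_G(C), and set C^j = C ∩ Γ^j. Then K''_{C,G} is the simplicial join K''_{C^1,G} * K''_{C^2,G} * ... * K''_{C^q,G}. -/
attribute [local instance] Classical.propDecidable

/-! ## Pseudographs, tubes and tubing complexes -/

/-- An ambient multigraph structure without loops: each edge label in `E` is assigned an
unordered pair of distinct nodes of `V`. -/
structure Amb (V E : Type) where
  ends : E → Sym2 V
  noLoop : ∀ e, ¬ (ends e).IsDiag

variable {V E : Type} [Fintype V] [Fintype E] [DecidableEq V] [DecidableEq E]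

/-- A pseudograph (without loops) on nodes from `V` with edges from `E`: a subgraph of the
ambient structure `A`, given by a finite set of nodes and a finite set of edges whose
endpoints belong to the node set. -/
structure PSG (A : Amb V E) where
  verts : Finset V
  edges : Finset E
  incl : ∀ e ∈ edges, ∀ v ∈ A.ends e, v ∈ verts

namespace PSG

variable {A : Amb V E}

noncomputable instance : DecidableEq (PSG A) := Classical.decEq _

noncomputable instance : Fintype (PSG A) :=
  Fintype.ofInjective (fun H => (H.verts, H.edges))
    (by intro a b h; cases a; cases b; simp_all)

/-- The parallel class (possibly a bundle) of edges of `H` with endpoint pair `s`. -/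
def cls (H : PSG A) (s : Sym2 V) : Finset E :=
  H.edges.filter fun e => A.ends e = s

/-- `e` is a multiple edge of `H`. -/
def MultipleIn (H : PSG A) (e : E) : Prop :=
  e ∈ H.edges ∧ 2 ≤ (H.cls (A.ends e)).card

/-- `I` is a subgraph of `H`. -/
def Le (I H : PSG A) : Prop := I.verts ⊆ H.verts ∧ I.edges ⊆ H.edges

/-- Adjacency of two nodes via an edge of `H`. -/
def adjIn (H : PSG A) (v w : V) : Prop := ∃ e ∈ H.edges, A.ends e = s(v, w)

/-- Reachability inside `H`. -/
def reachIn (H : PSG A) : V → V → Prop := Relation.ReflTransGen (adjIn H)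

/-- `H` is a (nonempty) connected pseudograph. -/
def ConnIn (H : PSG A) : Prop :=
  H.verts.Nonempty ∧ ∀ v ∈ H.verts, ∀ w ∈ H.verts, reachIn H v w

/-- `I` is a semi-induced subgraph of `H`: it contains at least one edge between every
pair of its nodes joined by an edge of `H`. -/
def SemiInducedIn (H I : PSG A) : Prop :=
  Le I H ∧ ∀ e ∈ H.edges, (∀ v ∈ A.ends e, v ∈ I.verts) →
    ∃ e' ∈ I.edges, A.ends e' = A.ends e

/-- `J` is a connected component of `H`. -/
def IsComponent (H J : PSG A) : Prop :=
  Le J H ∧ J.verts.Nonempty ∧ ConnIn J ∧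
    (J.edges = H.edges.filter fun e => ∀ v ∈ A.ends e, v ∈ J.verts) ∧
    ∀ e ∈ H.edges, (∃ v ∈ A.ends e, v ∈ J.verts) → ∀ v ∈ A.ends e, v ∈ J.verts

/-- `I` is properly contained in its connected component of `H`. -/
def ProperIn (H I : PSG A) : Prop :=
  (∃ v ∈ H.verts, v ∉ I.verts ∧ ∃ w ∈ I.verts, reachIn H v w) ∨
    (∃ e ∈ H.edges, (∀ v ∈ A.ends e, v ∈ I.verts) ∧ e ∉ I.edges)

/-- `I` is a tube of `H`: a proper connected semi-induced subgraph of a connected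
component of `H`. -/
def TubeIn (H I : PSG A) : Prop := SemiInducedIn H I ∧ ConnIn I ∧ ProperIn H I

/-- Two subgraphs meet by separation in `H`: they are disjoint and no edge of `H`
connects them. -/
def SeparatedIn (H I J : PSG A) : Prop :=
  Disjoint I.verts J.verts ∧
    ∀ e ∈ H.edges, ¬ ((∃ v ∈ A.ends e, v ∈ I.verts) ∧ ∃ v ∈ A.ends e, v ∈ J.verts)

/-- Two tubes are compatible: they coincide, meet by inclusion, or meet by separation. -/
def Compatible (H I J : PSG A) : Prop :=
  I = J ∨ Le I J ∨ Le J I ∨ SeparatedIn H I J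

/-- The simplicial complex of all tubings of `H` (dual to the boundary of the pseudograph
associahedron `P_H`). -/
def tubingComplex (H : PSG A) : ASC (PSG A) where
  faces := {S | (∀ I ∈ S, TubeIn H I) ∧ ∀ I ∈ S, ∀ J ∈ S, Compatible H I J}
  down_closed := fun hs hts =>
    ⟨fun I hI => hs.1 I (hts hI), fun I hI J hJ => hs.2 I (hts hI) J (hts hJ)⟩

end PSG

/-- A collection of nodes and (multiple) edges, i.e. a candidate subset of `C_G`. -/
abbrev Coll (V E : Type) := Finset V × Finset E

namespace PSG

variable {A : Amb V E}

/-- The number of elements of the collection `C` belonging to the subgraph `I`,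
i.e. `|I ∩ C|`. -/
def interCard (I : PSG A) (C : Coll V E) : ℕ :=
  (I.verts ∩ C.1).card + (I.edges ∩ C.2).card

/-- `C ∈ 2^{C_G}_even`: `C` consists of nodes and multiple edges of `G`, with evenly many
nodes and evenly many edges from each bundle. -/
def EvenColl (G : PSG A) (C : Coll V E) : Prop :=
  C.1 ⊆ G.verts ∧ C.2 ⊆ G.edges ∧ (∀ e ∈ C.2, MultipleIn G e) ∧
    Even C.1.card ∧ ∀ s : Sym2 V, Even ((C.2 ∩ G.cls s).card)

/-- The subgraph `Γ̃_G(C)` of `G` induced by the nodes belonging to `C` or incident to an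
edge of `C`. -/
def GammaTilde (G : PSG A) (C : Coll V E) : PSG A where
  verts := G.verts.filter fun v => v ∈ C.1 ∨ ∃ e ∈ C.2, v ∈ A.ends e
  edges := G.edges.filter fun e => ∀ v ∈ A.ends e,
    v ∈ G.verts.filter fun v => v ∈ C.1 ∨ ∃ e ∈ C.2, v ∈ A.ends e
  incl := by
    intro e he v hv
    exact (Finset.mem_filter.1 he).2 v hv

/-- The simplicial complex `K^odd_{C,G}`: tubings of `G` consisting of tubes `I` with
`|I ∩ C|` odd. -/
def Kodd (G : PSG A) (C : Coll V E) : ASC (PSG A) where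
  faces := {S | S ∈ (tubingComplex G).faces ∧ ∀ I ∈ S, Odd (interCard I C)}
  down_closed := fun hs hts =>
    ⟨(tubingComplex G).down_closed hs.1 hts, fun I hI => hs.2 I (hts hI)⟩

/-- The subcomplex `K'_{C,G}` of `K^odd_{C,G}` on the tubes contained in `Γ̃_G(C)`. -/
def Kp (G : PSG A) (C : Coll V E) : ASC (PSG A) where
  faces := {S | S ∈ (Kodd G C).faces ∧ ∀ I ∈ S, Le I (GammaTilde G C)}
  down_closed := fun hs hts =>
    ⟨(Kodd _ _).down_closed hs.1 hts, fun I hI => hs.2 I (hts hI)⟩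

/-- The bundle condition on a tube `I`: for every bundle `B` of `Γ̃_G(C)` disjoint from
`C`, if both endpoints of `B` lie in `I` then `B ⊆ I`. -/
def BundleOK (G : PSG A) (C : Coll V E) (I : PSG A) : Prop :=
  ∀ s : Sym2 V, 2 ≤ ((GammaTilde G C).cls s).card →
    C.2 ∩ (GammaTilde G C).cls s = ∅ →
    (∀ v ∈ s, v ∈ I.verts) → (GammaTilde G C).cls s ⊆ I.edges

/-- The subcomplex `K''_{C,G}` of `K'_{C,G}` on the tubes satisfying the bundle
condition. -/
def Kpp (G : PSG A) (C : Coll V E) : ASC (PSG A) where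
  faces := {S | S ∈ (Kp G C).faces ∧ ∀ I ∈ S, BundleOK G C I}
  down_closed := fun hs hts =>
    ⟨(Kp _ _).down_closed hs.1 hts, fun I hI => hs.2 I (hts hI)⟩

/-- The restriction `C ∩ J` of a collection to a subgraph `J`. -/
def restrictColl (C : Coll V E) (J : PSG A) : Coll V E := (C.1 ∩ J.verts, C.2 ∩ J.edges)

/-- `C ∈ 2^{C_G}_even*`: moreover every connected component of `Γ̃_G(C)` is even with
respect to `C`. -/
def EvenStar (G : PSG A) (C : Coll V E) : Prop :=
  EvenColl G C ∧ ∀ J : PSG A, IsComponent (GammaTilde G C) J → Even (interCard J C)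

/-- The subgraph of `G` induced by a set `W` of nodes. -/
def inducedSub (G : PSG A) (W : Finset V) : PSG A where
  verts := W ∩ G.verts
  edges := G.edges.filter fun e => ∀ v ∈ A.ends e, v ∈ W ∩ G.verts
  incl := by
    intro e he v hv
    exact (Finset.mem_filter.1 he).2 v hv

/-- `H` is a partial underlying pseudograph of `H'`: it has the same nodes, and each
parallel class of `H'` is either kept entirely or replaced by a single (simple) edge. -/
def PartialUnderlying (H' H : PSG A) : Prop :=
  H.verts = H'.verts ∧ H.edges ⊆ H'.edges ∧
    ∀ s : Sym2 V, H'.cls s ⊆ H.edges ∨ (H.edges ∩ H'.cls s).card = 1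

/-- `H ⋖ G`: `H` is a partial underlying pseudograph of an induced subgraph of `G`. -/
def Lt (H G : PSG A) : Prop := ∃ W : Finset V, PartialUnderlying (inducedSub G W) H

/-- `H` is (a representative of) the pseudograph `Γ_G(C)`, obtained from `Γ̃_G(C)` by
replacing each bundle disjoint from `C` by a single simple edge. -/
def IsGammaOf (G : PSG A) (C : Coll V E) (H : PSG A) : Prop :=
  H.verts = (GammaTilde G C).verts ∧ H.edges ⊆ (GammaTilde G C).edges ∧
    ∀ s : Sym2 V,
      (((C.2 ∩ (GammaTilde G C).cls s).Nonempty ∨ ((GammaTilde G C).cls s).card ≤ 1) →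
        (GammaTilde G C).cls s ⊆ H.edges) ∧
      (C.2 ∩ (GammaTilde G C).cls s = ∅ → 2 ≤ ((GammaTilde G C).cls s).card →
        (H.edges ∩ (GammaTilde G C).cls s).card = 1)

/-- Admissibility of a collection `C` for a connected pseudograph `J`:
(a1) evenness, (a2) `C` contains every node not incident to a bundle, and
(a3) `C` meets every bundle. -/
def AdmissibleConn (J : PSG A) (C : Coll V E) : Prop :=
  Even ((C.1 ∩ J.verts).card) ∧ (∀ s : Sym2 V, Even ((C.2 ∩ J.cls s).card)) ∧
    (∀ v ∈ J.verts, (∀ s : Sym2 V, v ∈ s → (J.cls s).card ≤ 1) → v ∈ C.1) ∧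
    ∀ s : Sym2 V, 2 ≤ (J.cls s).card → (C.2 ∩ J.cls s).Nonempty

/-- `C` is an admissible collection of the pseudograph `H` (componentwise). -/
def Admissible (H : PSG A) (C : Coll V E) : Prop :=
  C.1 ⊆ H.verts ∧ C.2 ⊆ H.edges ∧ (∀ e ∈ C.2, MultipleIn H e) ∧
    ∀ J : PSG A, IsComponent H J → AdmissibleConn J C

end PSG

/-! ## Auxiliary lemmas -/

lemma ASC.ext' {α : Type} {K L : ASC α} (h : K.faces = L.faces) : K = L := by
  cases K; cases L; simp_all

namespace PSG

variable {V E : Type} [Fintype V] [Fintype E] [DecidableEq V] [DecidableEq E] {A : Amb V E}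

lemma ext' {H H' : PSG A} (hv : H.verts = H'.verts) (he : H.edges = H'.edges) : H = H' := by
  cases H; cases H'; simp_all

lemma le_trans' {I J K : PSG A} (h1 : Le I J) (h2 : Le J K) : Le I K :=
  ⟨h1.1.trans h2.1, h1.2.trans h2.2⟩

lemma adjIn_symm {H : PSG A} {x y : V} (h : adjIn H x y) : adjIn H y x := by
  obtain ⟨e, he, hs⟩ := h
  exact ⟨e, he, by rw [hs, Sym2.eq_swap]⟩

lemma reachIn_symm {H : PSG A} {x y : V} (h : reachIn H x y) : reachIn H y x :=
  haveI : Std.Symm (adjIn H) := ⟨fun _ _ => adjIn_symm⟩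
  Std.Symm.symm (r := Relation.ReflTransGen (adjIn H)) _ _ h

lemma reachIn_mono {I H : PSG A} (hle : Le I H) {x y : V} (h : reachIn I x y) :
    reachIn H x y := by
  induction h with
  | refl => exact Relation.ReflTransGen.refl
  | tail _ hadj ih =>
      obtain ⟨e, he, hs⟩ := hadj
      exact ih.tail ⟨e, hle.2 he, hs⟩

/-- The connected component of `H` containing `v`. -/
noncomputable def compOf (H : PSG A) (v : V) : PSG A where
  verts := H.verts.filter fun w => reachIn H v w
  edges := H.edges.filter fun e => ∀ w ∈ A.ends e, w ∈ H.verts.filter fun w => reachIn H v w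
  incl := fun e he w hw => (Finset.mem_filter.1 he).2 w hw

lemma mem_compOf_verts {H : PSG A} {v w : V} :
    w ∈ (compOf H v).verts ↔ w ∈ H.verts ∧ reachIn H v w := Finset.mem_filter

lemma reachIn_compOf {H : PSG A} {v w : V} (hv : v ∈ H.verts) (h : reachIn H v w) :
    reachIn (compOf H v) v w := by
  induction h with
  | refl => exact Relation.ReflTransGen.refl
  | @tail b c hvb hadj ih =>
      obtain ⟨e, he, hs⟩ := hadj
      refine ih.tail ⟨e, Finset.mem_filter.2 ⟨he, ?_⟩, hs⟩
      intro w hw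
      rw [hs, Sym2.mem_iff] at hw
      rcases hw with rfl | rfl
      · exact mem_compOf_verts.2 ⟨H.incl e he w (by rw [hs]; exact Sym2.mem_mk_left _ _), hvb⟩
      · exact mem_compOf_verts.2 ⟨H.incl e he w (by rw [hs]; exact Sym2.mem_mk_right _ _),
          hvb.tail ⟨e, he, hs⟩⟩

lemma isComponent_compOf {H : PSG A} {v : V} (hv : v ∈ H.verts) :
    IsComponent H (compOf H v) := by
  have hvmem : v ∈ (compOf H v).verts := mem_compOf_verts.2 ⟨hv, Relation.ReflTransGen.refl⟩
  have hle : Le (compOf H v) H :=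
    ⟨Finset.filter_subset _ _, Finset.filter_subset _ _⟩
  refine ⟨hle, ⟨v, hvmem⟩, ⟨⟨v, hvmem⟩, ?_⟩, rfl, ?_⟩
  · intro x hx y hy
    have hx' := mem_compOf_verts.1 hx
    have hy' := mem_compOf_verts.1 hy
    exact (reachIn_symm (reachIn_compOf hv hx'.2)).trans (reachIn_compOf hv hy'.2)
  · intro e he ⟨x, hxe, hx⟩ w hw
    have hx' := mem_compOf_verts.1 hx
    by_cases hxw : x = w
    · exact hxw ▸ hx
    · have hs : A.ends e = s(x, w) := (Sym2.mem_and_mem_iff hxw).1 ⟨hxe, hw⟩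
      exact mem_compOf_verts.2 ⟨H.incl e he w hw, hx'.2.tail ⟨e, he, hs⟩⟩

lemma le_compOf {H I : PSG A} {v : V} (hle : Le I H) (hconn : ConnIn I)
    (hv : v ∈ I.verts) : Le I (compOf H v) := by
  have hverts : I.verts ⊆ (compOf H v).verts := by
    intro w hw
    exact mem_compOf_verts.2 ⟨hle.1 hw, reachIn_mono hle (hconn.2 v hv w hw)⟩
  refine ⟨hverts, ?_⟩
  intro e he
  exact Finset.mem_filter.2 ⟨hle.2 he, fun w hw => hverts (I.incl e he w hw)⟩

/-- Edge characterization for components. -/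
lemma component_edge_mem {H J : PSG A} (hJ : IsComponent H J) {e : E}
    (he : e ∈ H.edges) (hends : ∀ v ∈ A.ends e, v ∈ J.verts) : e ∈ J.edges := by
  rw [hJ.2.2.2.1]
  exact Finset.mem_filter.2 ⟨he, hends⟩

/-- Distinct components have disjoint vertex sets. -/
lemma components_disjoint {H J J' : PSG A} (hJ : IsComponent H J)
    (hJ' : IsComponent H J') (hne : J ≠ J') : Disjoint J.verts J'.verts := by
  rw [Finset.disjoint_left]
  intro v hv hv'
  apply hne
  have key : ∀ {K K' : PSG A}, IsComponent H K → IsComponent H K' →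
      v ∈ K.verts → v ∈ K'.verts → K.verts ⊆ K'.verts := by
    intro K K' hK hK' hvK hvK' w hw
    have hreach : reachIn K v w := hK.2.2.1.2 v hvK w hw
    clear hw
    induction hreach with
    | refl => exact hvK'
    | @tail b c hvb hadj ih =>
        obtain ⟨e, he, hs⟩ := hadj
        exact hK'.2.2.2.2 e (hK.1.2 he) ⟨b, by rw [hs]; exact Sym2.mem_mk_left _ _, ih⟩
          c (by rw [hs]; exact Sym2.mem_mk_right _ _)
  have hvv : J.verts = J'.verts :=
    le_antisymm (key hJ hJ' hv hv') (key hJ' hJ hv' hv)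
  refine ext' hvv ?_
  rw [hJ.2.2.2.1, hJ'.2.2.2.1, hvv]

lemma le_component_of_verts {H I J : PSG A} (hJ : IsComponent H J) (hI : Le I H)
    (hv : I.verts ⊆ J.verts) : Le I J := by
  refine ⟨hv, fun e he => component_edge_mem hJ (hI.2 he) fun w hw => hv (I.incl e he w hw)⟩

lemma mem_gammaTilde_verts {G : PSG A} {C : Coll V E} {v : V} :
    v ∈ (GammaTilde G C).verts ↔ v ∈ G.verts ∧ (v ∈ C.1 ∨ ∃ e ∈ C.2, v ∈ A.ends e) :=
  Finset.mem_filter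

lemma mem_gammaTilde_edges {G : PSG A} {C : Coll V E} {e : E} :
    e ∈ (GammaTilde G C).edges ↔ e ∈ G.edges ∧ ∀ v ∈ A.ends e, v ∈ (GammaTilde G C).verts :=
  Finset.mem_filter

lemma edge_of_collEdge {G : PSG A} {C : Coll V E} (hC2 : C.2 ⊆ G.edges) {e : E}
    (he : e ∈ C.2) : e ∈ (GammaTilde G C).edges := by
  refine mem_gammaTilde_edges.2 ⟨hC2 he, fun w hw => ?_⟩
  exact mem_gammaTilde_verts.2 ⟨G.incl e (hC2 he) w hw, Or.inr ⟨e, he, hw⟩⟩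

/-- `Γ̃_G(C ∩ Γ^j) = Γ^j`. -/
lemma gammaTilde_restrict {G : PSG A} {C : Coll V E} {J : PSG A}
    (hC2 : C.2 ⊆ G.edges) (hJ : IsComponent (GammaTilde G C) J) :
    GammaTilde G (restrictColl C J) = J := by
  have hverts : (GammaTilde G (restrictColl C J)).verts = J.verts := by
    ext v
    rw [mem_gammaTilde_verts]
    constructor
    · rintro ⟨hvG, hv | ⟨e, he, hve⟩⟩
      · exact (Finset.mem_inter.1 hv).2
      · exact J.incl e (Finset.mem_inter.1 he).2 v hve
    · intro hv
      have hv' := mem_gammaTilde_verts.1 (hJ.1.1 hv)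
      refine ⟨hv'.1, ?_⟩
      rcases hv'.2 with hc | ⟨e, he, hve⟩
      · exact Or.inl (Finset.mem_inter.2 ⟨hc, hv⟩)
      · have heG : e ∈ (GammaTilde G C).edges := edge_of_collEdge hC2 he
        have hends : ∀ w ∈ A.ends e, w ∈ J.verts := hJ.2.2.2.2 e heG ⟨v, hve, hv⟩
        exact Or.inr ⟨e, Finset.mem_inter.2 ⟨he, component_edge_mem hJ heG hends⟩, hve⟩
  refine ext' hverts ?_
  ext e
  have hJe := hJ.2.2.2.1
  constructor
  · intro he
    have he' := mem_gammaTilde_edges.1 he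
    have hends : ∀ v ∈ A.ends e, v ∈ J.verts := fun v hv => hverts ▸ he'.2 v hv
    refine hJe ▸ Finset.mem_filter.2 ⟨?_, hends⟩
    exact mem_gammaTilde_edges.2 ⟨he'.1, fun v hv => hJ.1.1 (hends v hv)⟩
  · intro he
    have he' := Finset.mem_filter.1 (hJe ▸ he)
    refine mem_gammaTilde_edges.2 ⟨(Finset.mem_filter.1 he'.1).1, fun v hv => ?_⟩
    exact hverts ▸ he'.2 v hv

lemma interCard_restrict {I J : PSG A} {C : Coll V E} (hI : Le I J) :
    interCard I (restrictColl C J) = interCard I C := by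
  unfold interCard restrictColl
  congr 1
  · congr 1
    ext a
    simp only [Finset.mem_inter]
    exact ⟨fun h => ⟨h.1, h.2.1⟩, fun h => ⟨h.1, h.2, hI.1 h.1⟩⟩
  · congr 1
    ext a
    simp only [Finset.mem_inter]
    exact ⟨fun h => ⟨h.1, h.2.1⟩, fun h => ⟨h.1, h.2, hI.2 h.1⟩⟩

/-- If the endpoints of `s` lie in the component `J`, the parallel classes agree. -/
lemma cls_component {H J : PSG A} (hJ : IsComponent H J) {s : Sym2 V}
    (hs : ∀ v ∈ s, v ∈ J.verts) : H.cls s = J.cls s := by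
  ext e
  unfold cls
  simp only [Finset.mem_filter]
  constructor
  · rintro ⟨he, rfl⟩
    exact ⟨component_edge_mem hJ he hs, rfl⟩
  · rintro ⟨he, rfl⟩
    exact ⟨hJ.1.2 he, rfl⟩

lemma cls_endpoints {H : PSG A} {s : Sym2 V} (hne : (H.cls s).Nonempty) :
    ∀ v ∈ s, v ∈ H.verts := by
  obtain ⟨e, he⟩ := hne
  have he' := Finset.mem_filter.1 he
  intro v hv
  exact H.incl e he'.1 v (he'.2 ▸ hv)

lemma restrict_inter_cls {J : PSG A} {C : Coll V E} {s : Sym2 V} :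
    (restrictColl C J).2 ∩ J.cls s = C.2 ∩ J.cls s := by
  ext e
  simp only [restrictColl, Finset.mem_inter]
  exact ⟨fun h => ⟨h.1.1, h.2⟩, fun h => ⟨⟨h.1, (Finset.mem_filter.1 h.2).1⟩, h.2⟩⟩

lemma bundleOK_restrict {G : PSG A} {C : Coll V E} {J I : PSG A}
    (hC2 : C.2 ⊆ G.edges) (hJ : IsComponent (GammaTilde G C) J)
    (hI : BundleOK G C I) : BundleOK G (restrictColl C J) I := by
  unfold BundleOK
  rw [gammaTilde_restrict hC2 hJ]
  intro s h2 hdisj hv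
  have hne : (J.cls s).Nonempty := Finset.card_pos.1 (by omega)
  have hcls : (GammaTilde G C).cls s = J.cls s := cls_component hJ (cls_endpoints hne)
  rw [← hcls] at h2 ⊢
  refine hI s h2 ?_ hv
  rw [hcls, ← restrict_inter_cls, hdisj]

lemma bundleOK_of_restrict {G : PSG A} {C : Coll V E} {J I : PSG A}
    (hC2 : C.2 ⊆ G.edges) (hJ : IsComponent (GammaTilde G C) J)
    (hIv : I.verts ⊆ J.verts) (hI : BundleOK G (restrictColl C J) I) : BundleOK G C I := by
  unfold BundleOK at hI
  rw [gammaTilde_restrict hC2 hJ] at hI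
  intro s h2 hdisj hv
  have hcls : (GammaTilde G C).cls s = J.cls s :=
    cls_component hJ (fun v hvs => hIv (hv v hvs))
  rw [hcls] at h2 hdisj ⊢
  refine hI s h2 ?_ hv
  rw [restrict_inter_cls, hdisj]

end PSG

open PSG in
/-- If `Γ^1, …, Γ^q` are the connected components of `Γ̃_G(C)` and
`C^j = C ∩ Γ^j`, then `K''_{C,G}` is the simplicial join of the complexes
`K''_{C^j,G}`. -/
theorem stmt8 {V E : Type} [Fintype V] [Fintype E] [DecidableEq V] [DecidableEq E]
    {A : Amb V E} (G : PSG A) (C : Coll V E) (hC : EvenColl G C)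
    (q : ℕ) (Γ : Fin q → PSG A)
    (hcomp : ∀ j, IsComponent (GammaTilde G C) (Γ j))
    (hinj : Function.Injective Γ)
    (hcover : ∀ J : PSG A, IsComponent (GammaTilde G C) J → ∃ j, J = Γ j) :
    Kpp G C = ASC.famJoin (fun j => Kpp G (restrictColl C (Γ j))) := by
  have hC2 : C.2 ⊆ G.edges := hC.2.1
  have hres : ∀ j, GammaTilde G (restrictColl C (Γ j)) = Γ j :=
    fun j => gammaTilde_restrict hC2 (hcomp j)
  -- each tube of a face of Kpp G C is contained in some component
  have hcontain : ∀ I : PSG A, TubeIn G I → Le I (GammaTilde G C) → ∃ j, Le I (Γ j) := by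
    intro I hT hle
    obtain ⟨v, hv⟩ := hT.2.1.1
    have hcomp' := isComponent_compOf (H := GammaTilde G C) (hle.1 hv)
    obtain ⟨j, hj⟩ := hcover _ hcomp'
    exact ⟨j, hj ▸ le_compOf hle hT.2.1 hv⟩
  apply ASC.ext'
  ext S
  simp only [Kpp, Kp, Kodd, tubingComplex, ASC.famJoin, Set.mem_setOf_eq]
  constructor
  · rintro ⟨⟨⟨⟨htube, hcompat⟩, hodd⟩, hle⟩, hbok⟩
    refine ⟨fun j => S.filter (fun I => I.verts ⊆ (Γ j).verts), ?_, ?_⟩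
    · intro j
      have hsub : ∀ I ∈ S.filter (fun I => I.verts ⊆ (Γ j).verts), Le I (Γ j) := by
        intro I hI
        have hI' := Finset.mem_filter.1 hI
        exact le_component_of_verts (hcomp j) (hle I hI'.1) hI'.2
      refine ⟨⟨⟨⟨?_, ?_⟩, ?_⟩, ?_⟩, ?_⟩
      · exact fun I hI => htube I (Finset.mem_filter.1 hI).1
      · exact fun I hI J hJ =>
          hcompat I (Finset.mem_filter.1 hI).1 J (Finset.mem_filter.1 hJ).1
      · intro I hI
        rw [interCard_restrict (hsub I hI)]
        exact hodd I (Finset.mem_filter.1 hI).1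
      · intro I hI
        rw [hres j]
        exact hsub I hI
      · exact fun I hI =>
          bundleOK_restrict hC2 (hcomp j) (hbok I (Finset.mem_filter.1 hI).1)
    · ext I
      simp only [Finset.mem_biUnion, Finset.mem_filter, Finset.mem_univ, true_and]
      constructor
      · intro hI
        obtain ⟨j, hj⟩ := hcontain I (htube I hI) (hle I hI)
        exact ⟨j, hI, hj.1⟩
      · rintro ⟨j, hI, -⟩
        exact hI
  · rintro ⟨f, hf, rfl⟩
    -- membership facts
    have hmem : ∀ I ∈ Finset.univ.biUnion f, ∃ j, I ∈ f j ∧ Le I (Γ j) := by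
      intro I hI
      obtain ⟨j, -, hj⟩ := Finset.mem_biUnion.1 hI
      refine ⟨j, hj, ?_⟩
      have := (hf j).1.2 I hj
      rwa [hres j] at this
    have htube : ∀ I ∈ Finset.univ.biUnion f, TubeIn G I := by
      intro I hI
      obtain ⟨j, hj, -⟩ := hmem I hI
      exact (hf j).1.1.1.1 I hj
    refine ⟨⟨⟨⟨htube, ?_⟩, ?_⟩, ?_⟩, ?_⟩
    · -- compatibility
      intro I hI J hJ
      obtain ⟨j, hIj, hIle⟩ := hmem I hI
      obtain ⟨k, hJk, hJle⟩ := hmem J hJ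
      by_cases hjk : j = k
      · subst hjk
        exact (hf j).1.1.1.2 I hIj J hJk
      · -- separated
        have hdisj : Disjoint (Γ j).verts (Γ k).verts :=
          components_disjoint (hcomp j) (hcomp k) (fun h => hjk (hinj h))
        refine Or.inr (Or.inr (Or.inr ⟨Finset.disjoint_left.2 fun v hv hv' =>
          Finset.disjoint_left.1 hdisj (hIle.1 hv) (hJle.1 hv'), ?_⟩))
        rintro e he ⟨⟨x, hxe, hxI⟩, ⟨y, hye, hyJ⟩⟩
        have hxΓ : x ∈ (Γ j).verts := hIle.1 hxI
        have hyΓ : y ∈ (Γ k).verts := hJle.1 hyJ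
        have hxy : x ≠ y := fun h => Finset.disjoint_left.1 hdisj hxΓ (h ▸ hyΓ)
        have hs : A.ends e = s(x, y) := (Sym2.mem_and_mem_iff hxy).1 ⟨hxe, hye⟩
        have heG : e ∈ (GammaTilde G C).edges := by
          refine mem_gammaTilde_edges.2 ⟨he, fun v hv => ?_⟩
          rw [hs, Sym2.mem_iff] at hv
          rcases hv with rfl | rfl
          · exact ((hcomp j).1.1 hxΓ)
          · exact ((hcomp k).1.1 hyΓ)
        have : y ∈ (Γ j).verts := (hcomp j).2.2.2.2 e heG ⟨x, hxe, hxΓ⟩ y hye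
        exact Finset.disjoint_left.1 hdisj this hyΓ
    · -- odd
      intro I hI
      obtain ⟨j, hIj, hIle⟩ := hmem I hI
      have := (hf j).1.1.2 I hIj
      rwa [interCard_restrict hIle] at this
    · -- Le GammaTilde
      intro I hI
      obtain ⟨j, -, hIle⟩ := hmem I hI
      exact le_trans' hIle (hcomp j).1
    · -- BundleOK
      intro I hI
      obtain ⟨j, hIj, hIle⟩ := hmem I hI
      exact bundleOK_of_restrict hC2 (hcomp j) hIle.1 ((hf j).2 I hIj)
end

section
/- Let G be a pseudograph and C ⊆ C_G. Then C belongs to 2^{C_G}_even* if and only if C is an admissible collection of the pseudograph Γ_G(C). -/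
attribute [local instance] Classical.propDecidable

variable {V E : Type} [Fintype V] [Fintype E] [DecidableEq V] [DecidableEq E]

namespace PSG

variable {V E : Type} [Fintype V] [Fintype E] [DecidableEq V] [DecidableEq E] {A : Amb V E}

lemma psg_ext {H K : PSG A} (hv : H.verts = K.verts) (he : H.edges = K.edges) : H = K := by
  cases H; cases K; simp_all

lemma mem_cls' {H : PSG A} {e : E} {s : Sym2 V} :
    e ∈ H.cls s ↔ e ∈ H.edges ∧ A.ends e = s := Finset.mem_filter

lemma adjIn_symm_s12 (H : PSG A) : Symmetric (adjIn H) := by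
  rintro v w ⟨e, he, hs⟩
  exact ⟨e, he, by rw [hs, Sym2.eq_swap]⟩

lemma reachIn_symm_s12 (H : PSG A) : Symmetric (reachIn H) :=
  by haveI : Std.Symm (adjIn H) := ⟨adjIn_symm_s12 H⟩; exact fun a b h => (Relation.ReflTransGen.stdSymm (r := adjIn H)).symm a b h

lemma reachIn_mono_s12 {H K : PSG A} (h : H.edges ⊆ K.edges) {v w : V} (hr : reachIn H v w) :
    reachIn K v w :=
  Relation.ReflTransGen.mono (r := adjIn H) (p := adjIn K) (fun a b hab => by
    obtain ⟨e, he, hs⟩ := hab; exact ⟨e, h he, hs⟩) v w hr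

/-- The connected component of `H` containing `v`. -/
noncomputable def compPSG (H : PSG A) (v : V) : PSG A where
  verts := H.verts.filter fun w => reachIn H v w
  edges := H.edges.filter fun e => ∀ u ∈ A.ends e, u ∈ H.verts.filter fun w => reachIn H v w
  incl := fun e he u hu => (Finset.mem_filter.1 he).2 u hu

lemma mem_compPSG_verts {H : PSG A} {v w : V} :
    w ∈ (compPSG H v).verts ↔ w ∈ H.verts ∧ reachIn H v w := Finset.mem_filter

lemma compPSG_isComponent {H : PSG A} {v : V} (hv : v ∈ H.verts) :
    IsComponent H (compPSG H v) := by
  have hreach : ∀ w, reachIn H v w → reachIn (compPSG H v) v w := by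
    intro w hw
    induction hw with
    | refl => exact Relation.ReflTransGen.refl
    | tail hab hbc ih =>
      rename_i b c
      obtain ⟨e, he, hs⟩ := hbc
      have hbv : b ∈ H.verts := H.incl e he b (by rw [hs]; exact Sym2.mem_mk_left b c)
      have hcv : c ∈ H.verts := H.incl e he c (by rw [hs]; exact Sym2.mem_mk_right b c)
      have heJ : e ∈ (compPSG H v).edges := by
        refine Finset.mem_filter.2 ⟨he, ?_⟩
        intro u hu
        rw [hs] at hu
        rcases Sym2.mem_iff.1 hu with rfl | rfl
        · exact Finset.mem_filter.2 ⟨hbv, hab⟩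
        · exact Finset.mem_filter.2 ⟨hcv, hab.tail ⟨e, he, hs⟩⟩
      exact ih.tail ⟨e, heJ, hs⟩
  refine ⟨⟨Finset.filter_subset _ _, Finset.filter_subset _ _⟩,
    ⟨v, Finset.mem_filter.2 ⟨hv, Relation.ReflTransGen.refl⟩⟩,
    ⟨⟨v, Finset.mem_filter.2 ⟨hv, Relation.ReflTransGen.refl⟩⟩, ?_⟩, rfl, ?_⟩
  · intro a ha b hb
    obtain ⟨-, hra⟩ := Finset.mem_filter.1 ha
    obtain ⟨-, hrb⟩ := Finset.mem_filter.1 hb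
    exact Relation.ReflTransGen.trans (reachIn_symm_s12 _ (hreach a hra)) (hreach b hrb)
  · rintro e he ⟨u, hu, huJ⟩ w hw
    obtain ⟨huv, hru⟩ := Finset.mem_filter.1 huJ
    have hwv : w ∈ H.verts := H.incl e he w hw
    by_cases hw' : w = u
    · subst hw'; exact huJ
    · have hadj : adjIn H u w := by
        obtain ⟨⟨a, b⟩, hab'⟩ := Quot.exists_rep (A.ends e)
        have hab : A.ends e = s(a, b) := hab'.symm
        rw [hab] at hu hw
        rcases Sym2.mem_iff.1 hu with rfl | rfl <;> rcases Sym2.mem_iff.1 hw with rfl | rfl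
        · exact absurd rfl hw'
        · exact ⟨e, he, hab⟩
        · exact ⟨e, he, by rw [hab, Sym2.eq_swap]⟩
        · exact absurd rfl hw'
      exact Finset.mem_filter.2 ⟨hwv, hru.tail hadj⟩

lemma component_eq_compPSG {H J : PSG A} (hJ : IsComponent H J) {v : V} (hv : v ∈ J.verts) :
    J = compPSG H v := by
  have hclosed : ∀ w, reachIn H v w → w ∈ J.verts := by
    intro w hw
    induction hw with
    | refl => exact hv
    | tail h1 h2 ih =>
      rename_i b c
      obtain ⟨e, he, hs⟩ := h2
      have hall : ∀ u ∈ A.ends e, u ∈ J.verts :=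
        hJ.2.2.2.2 e he ⟨b, by rw [hs]; exact Sym2.mem_mk_left b c, ih⟩
      exact hall c (by rw [hs]; exact Sym2.mem_mk_right b c)
  have hV : J.verts = (compPSG H v).verts := by
    ext w
    rw [mem_compPSG_verts]
    constructor
    · intro hw
      exact ⟨hJ.1.1 hw, reachIn_mono_s12 hJ.1.2 (hJ.2.2.1.2 v hv w hw)⟩
    · rintro ⟨-, hr⟩
      exact hclosed w hr
  refine psg_ext hV ?_
  rw [hJ.2.2.2.1, hV]
  rfl

lemma compPSG_verts_congr {H K : PSG A} (hv : H.verts = K.verts)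
    (ha : ∀ a b, adjIn H a b ↔ adjIn K a b) (v : V) :
    (compPSG H v).verts = (compPSG K v).verts := by
  have hr : ∀ a b, reachIn H a b ↔ reachIn K a b := fun a b =>
    ⟨Relation.ReflTransGen.mono (fun x y h => (ha x y).1 h) a b,
     Relation.ReflTransGen.mono (fun x y h => (ha x y).2 h) a b⟩
  ext w
  rw [mem_compPSG_verts, mem_compPSG_verts, hv, hr]

lemma even_edges_of_cls (J : PSG A) (C : Coll V E)
    (h : ∀ s : Sym2 V, Even ((C.2 ∩ J.cls s).card)) : Even ((J.edges ∩ C.2).card) := by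
  rw [Finset.card_eq_sum_card_fiberwise (f := A.ends)
    (t := (J.edges ∩ C.2).image A.ends) (fun x hx => Finset.mem_image_of_mem _ hx)]
  refine Finset.even_sum _ fun s hs => ?_
  have hfib : (J.edges ∩ C.2).filter (fun e => A.ends e = s) = C.2 ∩ J.cls s := by
    ext e
    simp only [Finset.mem_filter, Finset.mem_inter, cls]
    tauto
  rw [hfib]
  exact h s

end PSG

open PSG in
/-- A collection `C ⊆ C_G` belongs to `2^{C_G}_even*` if and only if
`C` is an admissible collection of the pseudograph `Γ_G(C)`. -/
theorem stmt12 {V E : Type} [Fintype V] [Fintype E] [DecidableEq V] [DecidableEq E]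
    {A : Amb V E} (G : PSG A) (C : Coll V E)
    (hsub : C.1 ⊆ G.verts ∧ C.2 ⊆ G.edges ∧ ∀ e ∈ C.2, MultipleIn G e)
    (H : PSG A) (hH : IsGammaOf G C H) :
    EvenStar G C ↔ Admissible H C := by
  obtain ⟨hC1G, hC2G, hmulG⟩ := hsub
  obtain ⟨hHv, hHe, hHcls⟩ := hH
  set Γ := GammaTilde G C with hΓ
  have hΓverts : ∀ w : V, w ∈ Γ.verts ↔ w ∈ G.verts ∧ (w ∈ C.1 ∨ ∃ e ∈ C.2, w ∈ A.ends e) :=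
    fun w => Finset.mem_filter
  have hΓedges : ∀ e : E, e ∈ Γ.edges ↔ e ∈ G.edges ∧ ∀ u ∈ A.ends e, u ∈ Γ.verts :=
    fun e => Finset.mem_filter
  have hΓsubG : Γ.edges ⊆ G.edges := Finset.filter_subset _ _
  have hC2Γ : C.2 ⊆ Γ.edges := by
    intro e he
    refine (hΓedges e).2 ⟨hC2G he, ?_⟩
    intro u hu
    exact (hΓverts u).2 ⟨G.incl e (hC2G he) u hu, Or.inr ⟨e, he, hu⟩⟩
  have hclsΓG : ∀ s : Sym2 V, Γ.cls s ⊆ G.cls s := by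
    intro s e he
    obtain ⟨h1, h2⟩ := mem_cls'.1 he
    exact mem_cls'.2 ⟨hΓsubG h1, h2⟩
  have hclsfull : ∀ e ∈ C.2, Γ.cls (A.ends e) = G.cls (A.ends e) := by
    intro e he
    refine Finset.Subset.antisymm (hclsΓG _) ?_
    intro e' he'
    obtain ⟨h1, h2⟩ := mem_cls'.1 he'
    refine mem_cls'.2 ⟨?_, h2⟩
    refine (hΓedges e').2 ⟨h1, ?_⟩
    intro u hu
    have hu' := hu
    rw [h2] at hu'
    exact (hΓverts u).2 ⟨G.incl e' h1 u hu, Or.inr ⟨e, he, hu'⟩⟩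
  have hclsHΓ : ∀ s : Sym2 V, H.cls s ⊆ Γ.cls s := by
    intro s e he
    obtain ⟨h1, h2⟩ := mem_cls'.1 he
    exact mem_cls'.2 ⟨hHe h1, h2⟩
  have hclsC : ∀ s : Sym2 V, (C.2 ∩ Γ.cls s).Nonempty → H.cls s = Γ.cls s := by
    intro s hne
    refine Finset.Subset.antisymm (hclsHΓ s) ?_
    intro e he
    exact mem_cls'.2 ⟨(hHcls s).1 (Or.inl hne) he, (mem_cls'.1 he).2⟩
  have hC2H : C.2 ⊆ H.edges := by
    intro e he
    have heΓ : e ∈ Γ.cls (A.ends e) := mem_cls'.2 ⟨hC2Γ he, rfl⟩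
    exact (hHcls (A.ends e)).1 (Or.inl ⟨e, Finset.mem_inter.2 ⟨he, heΓ⟩⟩) heΓ
  have hclsCH : ∀ s : Sym2 V, C.2 ∩ H.cls s = C.2 ∩ G.cls s := by
    intro s
    ext e
    simp only [Finset.mem_inter]
    refine and_congr_right fun he => ?_
    constructor
    · intro h
      exact hclsΓG s (hclsHΓ s h)
    · intro h
      have h2 := (mem_cls'.1 h).2
      have heΓ : e ∈ Γ.cls s := by
        rw [← h2, hclsfull e he, h2]
        exact h
      rw [hclsC s ⟨e, Finset.mem_inter.2 ⟨he, heΓ⟩⟩]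
      exact heΓ
  have hadj : ∀ a b, adjIn H a b ↔ adjIn Γ a b := by
    intro a b
    constructor
    · rintro ⟨e, he, hs⟩
      exact ⟨e, hHe he, hs⟩
    · rintro ⟨e, he, hs⟩
      have heΓ : e ∈ Γ.cls s(a, b) := mem_cls'.2 ⟨he, hs⟩
      by_cases hcase : (C.2 ∩ Γ.cls s(a, b)).Nonempty ∨ (Γ.cls s(a, b)).card ≤ 1
      · exact ⟨e, (hHcls _).1 hcase heΓ, hs⟩
      · push_neg at hcase
        have h1 := (hHcls s(a, b)).2 hcase.1 (by omega)
        have hne : (H.edges ∩ Γ.cls s(a, b)).Nonempty := Finset.card_pos.1 (by omega)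
        obtain ⟨e', he'⟩ := hne
        obtain ⟨he'H, he'Γ⟩ := Finset.mem_inter.1 he'
        exact ⟨e', he'H, (mem_cls'.1 he'Γ).2⟩
  have hvcongr : ∀ v : V, (compPSG H v).verts = (compPSG Γ v).verts :=
    fun v => compPSG_verts_congr hHv hadj v
  have hJJ' : ∀ J J' : PSG A, IsComponent H J → IsComponent Γ J' → J.verts = J'.verts →
      ∀ s : Sym2 V, C.2 ∩ J.cls s = C.2 ∩ J'.cls s := by
    intro J J' hJ hJ' hvv s
    ext e
    simp only [Finset.mem_inter]
    refine and_congr_right fun he => ?_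
    rw [mem_cls', mem_cls']
    refine and_congr_left fun hs => ?_
    rw [hJ.2.2.2.1, hJ'.2.2.2.1, Finset.mem_filter, Finset.mem_filter, hvv]
    constructor
    · rintro ⟨-, h⟩
      exact ⟨hC2Γ he, h⟩
    · rintro ⟨-, h⟩
      exact ⟨hC2H he, h⟩
  have hJHcls : ∀ J : PSG A, IsComponent H J → ∀ s : Sym2 V,
      C.2 ∩ J.cls s = ∅ ∨ C.2 ∩ J.cls s = C.2 ∩ H.cls s := by
    intro J hJ s
    by_cases hne : (C.2 ∩ J.cls s).Nonempty
    · right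
      obtain ⟨e0, he0⟩ := hne
      obtain ⟨he0C, he0J⟩ := Finset.mem_inter.1 he0
      obtain ⟨he0e, he0s⟩ := mem_cls'.1 he0J
      apply Finset.Subset.antisymm
      · intro e he
        obtain ⟨h1, h2⟩ := Finset.mem_inter.1 he
        obtain ⟨h3, h4⟩ := mem_cls'.1 h2
        exact Finset.mem_inter.2 ⟨h1, mem_cls'.2 ⟨hJ.1.2 h3, h4⟩⟩
      · intro e he
        obtain ⟨h1, h2⟩ := Finset.mem_inter.1 he
        obtain ⟨h3, h4⟩ := mem_cls'.1 h2
        refine Finset.mem_inter.2 ⟨h1, mem_cls'.2 ⟨?_, h4⟩⟩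
        rw [hJ.2.2.2.1, Finset.mem_filter]
        refine ⟨h3, ?_⟩
        intro u hu
        rw [h4, ← he0s] at hu
        exact J.incl e0 he0e u hu
    · left
      exact Finset.not_nonempty_iff_eq_empty.1 hne
  constructor
  · rintro ⟨⟨h1, h2, h3, h4, h5⟩, hcomp⟩
    have hC1H : C.1 ⊆ H.verts := by
      intro w hw
      rw [hHv]
      exact (hΓverts w).2 ⟨h1 hw, Or.inl hw⟩
    refine ⟨hC1H, hC2H, ?_, ?_⟩
    · intro e he
      refine ⟨hC2H he, ?_⟩
      have hfull : H.cls (A.ends e) = G.cls (A.ends e) := by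
        rw [hclsC (A.ends e) ⟨e, Finset.mem_inter.2 ⟨he, mem_cls'.2 ⟨hC2Γ he, rfl⟩⟩⟩,
          hclsfull e he]
      rw [hfull]
      exact (hmulG e he).2
    · intro J hJ
      obtain ⟨v, hvJ⟩ := hJ.2.1
      have hvH : v ∈ H.verts := hJ.1.1 hvJ
      have hvΓ' : v ∈ Γ.verts := hHv ▸ hvH
      have hJeq : J = compPSG H v := component_eq_compPSG hJ hvJ
      have hJ'c : IsComponent Γ (compPSG Γ v) := compPSG_isComponent hvΓ'
      have hvv : J.verts = (compPSG Γ v).verts := by rw [hJeq]; exact hvcongr v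
      have hbe : ∀ s : Sym2 V, Even ((C.2 ∩ J.cls s).card) := by
        intro s
        rcases hJHcls J hJ s with h | h
        · simp [h]
        · rw [h, hclsCH]
          exact h5 s
      have hbe' : ∀ s : Sym2 V, Even ((C.2 ∩ (compPSG Γ v).cls s).card) := by
        intro s
        rw [← hJJ' J (compPSG Γ v) hJ hJ'c hvv]
        exact hbe s
      have heven' : Even (((compPSG Γ v).verts ∩ C.1).card
          + ((compPSG Γ v).edges ∩ C.2).card) := hcomp (compPSG Γ v) hJ'c
      have hevE : Even (((compPSG Γ v).edges ∩ C.2).card) := even_edges_of_cls _ C hbe'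
      have hevV : Even ((C.1 ∩ J.verts).card) := by
        rw [Finset.inter_comm, hvv]
        exact (Nat.even_add.1 heven').2 hevE
      refine ⟨hevV, hbe, ?_, ?_⟩
      · intro w hwJ hsmall
        by_contra hwC
        have hwΓ : w ∈ Γ.verts := hHv ▸ (hJ.1.1 hwJ)
        obtain ⟨hwG, hcase⟩ := (hΓverts w).1 hwΓ
        rcases hcase with h | ⟨e, heC, hwe⟩
        · exact hwC h
        · have heH : e ∈ H.edges := hC2H heC
          have hallJ : ∀ u ∈ A.ends e, u ∈ J.verts := hJ.2.2.2.2 e heH ⟨w, hwe, hwJ⟩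
          have hfull : H.cls (A.ends e) = G.cls (A.ends e) := by
            rw [hclsC (A.ends e) ⟨e, Finset.mem_inter.2 ⟨heC, mem_cls'.2 ⟨hC2Γ heC, rfl⟩⟩⟩,
              hclsfull e heC]
          have hsubJ : G.cls (A.ends e) ⊆ J.cls (A.ends e) := by
            intro e' he'
            obtain ⟨h1', h2'⟩ := mem_cls'.1 he'
            have he'H : e' ∈ H.edges := by
              have : e' ∈ H.cls (A.ends e) := hfull ▸ he'
              exact (mem_cls'.1 this).1
            refine mem_cls'.2 ⟨?_, h2'⟩
            rw [hJ.2.2.2.1, Finset.mem_filter]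
            refine ⟨he'H, ?_⟩
            intro u hu
            rw [h2'] at hu
            exact hallJ u hu
          have h2s : 2 ≤ (J.cls (A.ends e)).card :=
            le_trans (hmulG e heC).2 (Finset.card_le_card hsubJ)
          have := hsmall (A.ends e) hwe
          omega
      · intro s h2s
        have hsubH : J.cls s ⊆ H.cls s := by
          intro e he
          obtain ⟨a1, a2⟩ := mem_cls'.1 he
          exact mem_cls'.2 ⟨hJ.1.2 a1, a2⟩
        have h2Γ : 2 ≤ (Γ.cls s).card :=
          le_trans h2s (Finset.card_le_card fun e he => hclsHΓ s (hsubH he))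
        have hCne : (C.2 ∩ Γ.cls s).Nonempty := by
          by_contra hne
          have h1' := (hHcls s).2 (Finset.not_nonempty_iff_eq_empty.1 hne) h2Γ
          have hss : J.cls s ⊆ H.edges ∩ Γ.cls s := fun e he =>
            Finset.mem_inter.2 ⟨(mem_cls'.1 (hsubH he)).1, hclsHΓ s (hsubH he)⟩
          have := Finset.card_le_card hss
          omega
        obtain ⟨e, he⟩ := hCne
        obtain ⟨heC, heΓ⟩ := Finset.mem_inter.1 he
        have heH : e ∈ H.cls s := by
          rw [hclsC s ⟨e, Finset.mem_inter.2 ⟨heC, heΓ⟩⟩]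
          exact heΓ
        obtain ⟨e0, he0⟩ := Finset.card_pos.1 (by omega : 0 < (J.cls s).card)
        obtain ⟨he0J, he0s⟩ := mem_cls'.1 he0
        refine ⟨e, Finset.mem_inter.2 ⟨heC, mem_cls'.2 ⟨?_, (mem_cls'.1 heH).2⟩⟩⟩
        rw [hJ.2.2.2.1, Finset.mem_filter]
        refine ⟨(mem_cls'.1 heH).1, ?_⟩
        intro u hu
        rw [(mem_cls'.1 heH).2, ← he0s] at hu
        exact J.incl e0 he0J u hu
  · rintro ⟨hA1, hA2, hA3, hAc⟩
    constructor
    · refine ⟨hC1G, hC2G, hmulG, ?_, ?_⟩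
      · rw [Finset.card_eq_sum_card_fiberwise (f := fun w => compPSG H w)
          (t := C.1.image fun w => compPSG H w) (fun x hx => Finset.mem_image_of_mem _ hx)]
        refine Finset.even_sum _ fun J hJim => ?_
        obtain ⟨w, hwC, rfl⟩ := Finset.mem_image.1 hJim
        have hwH : w ∈ H.verts := hA1 hwC
        have hJc := compPSG_isComponent hwH
        have hfib : C.1.filter (fun u => compPSG H u = compPSG H w)
            = C.1 ∩ (compPSG H w).verts := by
          ext u
          simp only [Finset.mem_filter, Finset.mem_inter]
          refine and_congr_right fun huC => ?_
          constructor
          · intro h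
            rw [← h]
            exact mem_compPSG_verts.2 ⟨hA1 huC, Relation.ReflTransGen.refl⟩
          · intro h
            exact (component_eq_compPSG hJc h).symm
        rw [hfib]
        exact (hAc _ hJc).1
      · intro s
        by_cases hne : (C.2 ∩ G.cls s).Nonempty
        · obtain ⟨e, he⟩ := hne
          obtain ⟨heC, heG⟩ := Finset.mem_inter.1 he
          have hsE : A.ends e = s := (mem_cls'.1 heG).2
          obtain ⟨⟨a, b⟩, hab'⟩ := Quot.exists_rep (A.ends e)
          have hab : A.ends e = s(a, b) := hab'.symm
          have haH : a ∈ H.verts :=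
            H.incl e (hA2 heC) a (by rw [hab]; exact Sym2.mem_mk_left a b)
          have hJc : IsComponent H (compPSG H a) := compPSG_isComponent haH
          have haJ : a ∈ (compPSG H a).verts :=
            mem_compPSG_verts.2 ⟨haH, Relation.ReflTransGen.refl⟩
          have hGJ : C.2 ∩ G.cls s = C.2 ∩ (compPSG H a).cls s := by
            rw [← hclsCH s]
            ext e'
            simp only [Finset.mem_inter]
            refine and_congr_right fun he' => ?_
            rw [mem_cls', mem_cls']
            refine and_congr_left fun hs' => ?_
            constructor
            · intro hH'
              rw [hJc.2.2.2.1, Finset.mem_filter]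
              refine ⟨hH', ?_⟩
              exact hJc.2.2.2.2 e' hH'
                ⟨a, by rw [hs', ← hsE, hab]; exact Sym2.mem_mk_left a b, haJ⟩
            · intro hJ'
              exact hJc.1.2 hJ'
          rw [hGJ]
          exact (hAc _ hJc).2.1 s
        · rw [Finset.not_nonempty_iff_eq_empty.1 hne]
          simp
    · intro J' hJ'
      obtain ⟨v, hvJ'⟩ := hJ'.2.1
      have hvΓ' : v ∈ Γ.verts := hJ'.1.1 hvJ'
      have hvH : v ∈ H.verts := by rw [hHv]; exact hvΓ'
      have hJ'eq : J' = compPSG Γ v := component_eq_compPSG hJ' hvJ'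
      have hJc : IsComponent H (compPSG H v) := compPSG_isComponent hvH
      have hvv : (compPSG H v).verts = J'.verts := by rw [hJ'eq]; exact hvcongr v
      have hevV : Even ((J'.verts ∩ C.1).card) := by
        rw [Finset.inter_comm, ← hvv]
        exact (hAc _ hJc).1
      have hevE : Even ((J'.edges ∩ C.2).card) := by
        refine even_edges_of_cls J' C fun s => ?_
        rw [← hJJ' (compPSG H v) J' hJc hJ' hvv]
        exact (hAc _ hJc).2.1 s
      exact hevV.add hevE
end
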